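/- arXiv:2506.22619 — 8 statements merged into one kernel-verified Lean document; each statement's English description precedes it below -/
import Mathlib

section
/- Let G = (V, E) be a finite simple undirected bipartite graph with edge weights w : E → ℤ, let ℓ ≥ 1 be a natural number, and assume that G contains an ℓ-th smallest perfect matching M. Then there exists a set of edges F ⊆ E with |F| ≤ ℓ − 1 such that w(M) equals the minimum of w(M') over all perfect matchings M' of G with F ⊆ M'. -/
set_option linter.unusedSectionVars false
set_option linter.unusedVariables false
set_option maxHeartbeats 1600000

attribute [local instance] Classical.propDecidable

variable {V : Type} [Fintype V] [DecidableEq V]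

/-- A perfect matching of a graph `G`, viewed as a finite set of edges:
every edge belongs to `G` and every vertex lies in exactly one edge of `M`. -/
def IsPM (G : SimpleGraph V) (M : Finset (Sym2 V)) : Prop :=
  (∀ e ∈ M, e ∈ G.edgeSet) ∧ ∀ v : V, ∃! e, e ∈ M ∧ v ∈ e

/-- The total weight of a set of edges. -/
def wt (w : Sym2 V → ℤ) (X : Finset (Sym2 V)) : ℤ := ∑ e ∈ X, w e

/-- `NthSmallest G w ℓ M` (for `ℓ ≥ 1`) : `M` is an `ℓ`-th smallest perfect matching of `G`,
defined recursively: `M` is a perfect matching, `M` is not `ℓ'`-th smallest for any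
`1 ≤ ℓ' < ℓ`, and `M` has minimum weight among all perfect matchings that are not `ℓ'`-th
smallest for any `1 ≤ ℓ' < ℓ`. -/
def NthSmallest (G : SimpleGraph V) (w : Sym2 V → ℤ) : ℕ → Finset (Sym2 V) → Prop
  | ℓ, M =>
    IsPM G M ∧
    (∀ ℓ' : ℕ, 1 ≤ ℓ' → ℓ' < ℓ → ¬ NthSmallest G w ℓ' M) ∧
    ∀ M' : Finset (Sym2 V), IsPM G M' →
      (∀ ℓ' : ℕ, 1 ≤ ℓ' → ℓ' < ℓ → ¬ NthSmallest G w ℓ' M') → wt w M ≤ wt w M'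
  termination_by ℓ _ => ℓ

namespace PMAux

def IsInv (G : SimpleGraph V) (f : V → V) : Prop :=
  Function.Involutive f ∧ ∀ v, G.Adj v (f v)

def Mof (f : V → V) : Finset (Sym2 V) := Finset.univ.image (fun v => s(v, f v))

lemma mem_Mof {f : V → V} {e : Sym2 V} : e ∈ Mof f ↔ ∃ v, e = s(v, f v) := by
  simp [Mof, eq_comm]

lemma Mof_isPM {G : SimpleGraph V} {f : V → V} (hf : IsInv G f) : IsPM G (Mof f) := by
  constructor
  · intro e he
    rcases mem_Mof.mp he with ⟨v, rfl⟩
    exact (SimpleGraph.mem_edgeSet G).2 (hf.2 v)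
  · intro v
    refine ⟨s(v, f v), ⟨mem_Mof.mpr ⟨v, rfl⟩, by simp⟩, ?_⟩
    rintro e ⟨he, hve⟩
    rcases mem_Mof.mp he with ⟨u, rfl⟩
    rcases Sym2.mem_iff.mp hve with rfl | rfl
    · rfl
    · rw [hf.1 u]; exact Sym2.eq_swap

lemma Mof_eq {G : SimpleGraph V} {f : V → V} (hf : IsInv G f) {a b : V}
    (h : s(a, b) ∈ Mof f) (hab : a ≠ b) : f a = b := by
  rcases mem_Mof.mp h with ⟨v, hv⟩
  rcases Sym2.eq_iff.mp hv with ⟨h1, h2⟩ | ⟨h1, h2⟩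
  · rw [h1, h2]
  · rw [h1, hf.1 v]
    exact h2.symm

lemma exists_inv {G : SimpleGraph V} {P : Finset (Sym2 V)} (hP : IsPM G P) :
    ∃ f, IsInv G f ∧ P = Mof f := by
  have hchoice : ∀ v : V, ∃ u : V, s(v, u) ∈ P ∧ v ≠ u := by
    intro v
    obtain ⟨e, ⟨heP, hve⟩, _⟩ := hP.2 v
    have he : e ∈ G.edgeSet := hP.1 e heP
    refine ⟨Sym2.Mem.other' hve, ?_, ?_⟩
    · rw [Sym2.other_spec' hve]; exact heP
    · intro hv
      have : G.Adj v (Sym2.Mem.other' hve) := by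
        rw [← SimpleGraph.mem_edgeSet, Sym2.other_spec' hve]; exact he
      exact this.ne hv
  choose f hfP hfne using hchoice
  have huniq : ∀ v e, e ∈ P → v ∈ e → e = s(v, f v) := by
    intro v e heP hve
    obtain ⟨e', _, hu⟩ := hP.2 v
    have h1 := hu e ⟨heP, hve⟩
    have h2 := hu (s(v, f v)) ⟨hfP v, by simp⟩
    rw [h1, h2]
  have hinvol : Function.Involutive f := by
    intro v
    have h1 : s(v, f v) ∈ P := hfP v
    have h2 : f v ∈ s(v, f v) := by simp
    have h3 := huniq (f v) _ h1 h2
    rcases Sym2.eq_iff.mp h3 with ⟨h, h'⟩ | ⟨h, h'⟩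
    · exact absurd h (hfne v)
    · exact h.symm
  have hadj : ∀ v, G.Adj v (f v) := by
    intro v
    have := hP.1 _ (hfP v)
    exact (SimpleGraph.mem_edgeSet G).1 this
  refine ⟨f, ⟨hinvol, hadj⟩, ?_⟩
  ext e
  constructor
  · intro heP
    induction e with
    | h a b =>
      have : a ∈ s(a, b) := by simp
      exact mem_Mof.mpr ⟨a, huniq a _ heP this⟩
  · intro he
    rcases mem_Mof.mp he with ⟨v, rfl⟩
    exact hfP v

noncomputable def XF (X : Set V) : Finset V := Finset.univ.filter (· ∈ X)

lemma mem_XF {X : Set V} {v : V} : v ∈ XF X ↔ v ∈ X := by simp [XF]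

section Bip

variable {G : SimpleGraph V} {X : Set V}

lemma side (hX : ∀ u v, G.Adj u v → (u ∈ X ↔ v ∉ X)) {u v : V} (hadj : G.Adj u v)
    (hu : u ∈ X) : v ∉ X := (hX u v hadj).1 hu

lemma side' (hX : ∀ u v, G.Adj u v → (u ∈ X ↔ v ∉ X)) {u v : V} (hadj : G.Adj u v)
    (hu : u ∉ X) : v ∈ X := by
  by_contra hv
  exact hu ((hX u v hadj).2 hv)

lemma wt_Mof (w : Sym2 V → ℤ)
    (hX : ∀ u v, G.Adj u v → (u ∈ X ↔ v ∉ X))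
    {f : V → V} (hf : IsInv G f) :
    wt w (Mof f) = ∑ v ∈ XF X, w s(v, f v) := by
  unfold wt
  refine (Finset.sum_nbij (fun v => s(v, f v)) ?_ ?_ ?_ ?_).symm
  · intro v _; exact mem_Mof.mpr ⟨v, rfl⟩
  · intro u hu v hv huv
    simp only [Finset.coe_filter, Set.mem_setOf_eq, XF, Finset.mem_coe, mem_XF] at hu hv
    rcases Sym2.eq_iff.mp huv with ⟨h1, _⟩ | ⟨h1, h2⟩
    · exact h1
    · exfalso
      rw [h1] at hu
      exact (side hX (hf.2 v) hv.2) hu.2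
  · intro e he
    simp only [Finset.mem_coe] at he
    rcases mem_Mof.mp he with ⟨v, rfl⟩
    by_cases hv : v ∈ X
    · exact ⟨v, by simpa [XF] using hv, rfl⟩
    · refine ⟨f v, by simpa [XF] using side' hX (hf.2 v) hv, ?_⟩
      simp only
      rw [hf.1 v]
      exact Sym2.eq_swap.symm
  · intro v _; rfl

end Bip

lemma succ_mod {m : ℕ} (hm : 0 < m) (n : ℕ) :
    (n + 1) % m = if n % m + 1 = m then 0 else n % m + 1 := by
  rw [Nat.add_mod n 1 m]
  rcases Nat.lt_or_ge 1 m with h1 | h1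
  · rw [Nat.mod_eq_of_lt h1]
    split
    · next h => rw [h, Nat.mod_self]
    · next h =>
      have := Nat.mod_lt n hm
      exact Nat.mod_eq_of_lt (by omega)
  · interval_cases m
    simp [Nat.mod_one]

lemma periodic_mod {α : Type*} {h : ℕ → α} {m : ℕ} (hm : 0 < m)
    (hper : ∀ i, h (i + m) = h i) : ∀ n, h n = h (n % m) := by
  intro n
  induction n using Nat.strong_induction_on with
  | _ n IH =>
    rcases Nat.lt_or_ge n m with hn | hn
    · rw [Nat.mod_eq_of_lt hn]
    · have h1 : n = (n - m) + m := by omega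
      have h2 : h n = h (n - m) := by conv_lhs => rw [h1, hper]
      rw [h2, IH (n - m) (by omega), Nat.mod_eq_sub_mod hn]

lemma sum_shift (q : ℕ → ℤ) (k : ℕ) (hper : ∀ i, q (i + k) = q i) :
    ∀ t, ∑ i ∈ Finset.range k, q (i + t) = ∑ i ∈ Finset.range k, q i := by
  intro t
  induction t with
  | zero => simp
  | succ t IH =>
    have step : ∀ (r : ℕ → ℤ), (∀ i, r (i + k) = r i) →
        ∑ i ∈ Finset.range k, r (i + 1) = ∑ i ∈ Finset.range k, r i := by
      intro r hr
      have h1 := Finset.sum_range_succ' r k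
      have h2 := Finset.sum_range_succ r k
      have h3 : r k = r 0 := by have := hr 0; simpa using this
      omega
    have : ∀ i, (fun j => q (j + t)) (i + k) = (fun j => q (j + t)) i := by
      intro i; simp only; rw [show i + k + t = (i + t) + k by omega, hper]
    calc ∑ i ∈ Finset.range k, q (i + (t+1)) = ∑ i ∈ Finset.range k, q ((i + 1) + t) := by
          apply Finset.sum_congr rfl; intro i _; ring_nf
      _ = ∑ i ∈ Finset.range k, q (i + t) := step (fun j => q (j + t)) this
      _ = ∑ i ∈ Finset.range k, q i := IH

lemma sum_range_add' (f : ℕ → ℤ) (m n : ℕ) :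
    ∑ i ∈ Finset.range (m + n), f i
      = ∑ i ∈ Finset.range m, f i + ∑ i ∈ Finset.range n, f (m + i) := by
  induction n with
  | zero => simp
  | succ n IH =>
    rw [show m + (n+1) = (m+n) + 1 by omega, Finset.sum_range_succ, IH,
      Finset.sum_range_succ]
    ring

lemma ex_rank : ∀ (j : ℕ) (T : Finset ℤ), j < T.card →
    ∃ v ∈ T, (T.filter (· < v)).card = j := by
  intro j
  induction j with
  | zero =>
    intro T hT
    have hne : T.Nonempty := Finset.card_pos.mp (by omega)
    refine ⟨T.min' hne, T.min'_mem hne, ?_⟩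
    rw [Finset.card_eq_zero, Finset.filter_eq_empty_iff]
    intro u hu
    exact not_lt.mpr (T.min'_le u hu)
  | succ j IH =>
    intro T hT
    have hne : T.Nonempty := Finset.card_pos.mp (by omega)
    set m := T.min' hne with hm
    obtain ⟨v, hv, hvc⟩ := IH (T.erase m) (by
      rw [Finset.card_erase_of_mem (T.min'_mem hne)]; omega)
    have hvT : v ∈ T := Finset.mem_of_mem_erase hv
    have hmv : m < v := by
      have h1 : m ≤ v := T.min'_le v hvT
      have h2 : v ≠ m := Finset.ne_of_mem_erase hv
      omega
    refine ⟨v, hvT, ?_⟩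
    have hsplit : T.filter (· < v) = insert m ((T.erase m).filter (· < v)) := by
      ext u
      simp only [Finset.mem_filter, Finset.mem_insert, Finset.mem_erase]
      constructor
      · rintro ⟨huT, huv⟩
        by_cases hum : u = m
        · left; exact hum
        · right; exact ⟨⟨hum, huT⟩, huv⟩
      · rintro (rfl | ⟨⟨_, huT⟩, huv⟩)
        · exact ⟨T.min'_mem hne, hmv⟩
        · exact ⟨huT, huv⟩
    rw [hsplit, Finset.card_insert_of_notMem (by
      simp only [Finset.mem_filter, Finset.mem_erase]
      rintro ⟨⟨hmm, _⟩, _⟩; exact hmm rfl), hvc]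

noncomputable def SS (X : Set V) (g : V → V) (F₀ : Finset (Sym2 V)) : Finset V :=
  (XF X).filter (fun x => s(x, g x) ∉ F₀)

lemma mem_SS {X : Set V} {g : V → V} {F₀ : Finset (Sym2 V)} {v : V} :
    v ∈ SS X g F₀ ↔ v ∈ X ∧ s(v, g v) ∉ F₀ := by simp [SS, mem_XF, XF]

def lenw (w : Sym2 V → ℤ) (g : V → V) (a b : V) : ℤ := w s(a, g b) - w s(b, g b)

def AllW (G : SimpleGraph V) (g : V → V) (a b : V) : Prop := a = b ∨ G.Adj a (g b)

def GW (G : SimpleGraph V) (X : Set V) (g : V → V) (F₀ : Finset (Sym2 V))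
    (k : ℕ) (h : ℕ → V) : Prop :=
  (∀ i, h (i + k) = h i) ∧ (∀ i, h i ∈ SS X g F₀) ∧ (∀ i, AllW G g (h i) (h (i+1)))

noncomputable def wsumW (w : Sym2 V → ℤ) (g : V → V) (k : ℕ) (h : ℕ → V) : ℤ :=
  ∑ i ∈ Finset.range k, lenw w g (h i) (h (i+1))

section Cyc

variable {G : SimpleGraph V} {w : Sym2 V → ℤ} {X : Set V} {g : V → V} {F₀ : Finset (Sym2 V)}

lemma cycle_nonneg (hX : ∀ u v, G.Adj u v → (u ∈ X ↔ v ∉ X))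
    (hg : IsInv G g) (hFg : F₀ ⊆ Mof g)
    (hmin : ∀ P, IsPM G P → F₀ ⊆ P → wt w (Mof g) ≤ wt w P)
    {k : ℕ} {h : ℕ → V} (hk : 0 < k) (hgw : GW G X g F₀ k h)
    (hinj : ∀ i j, i < k → j < k → h i = h j → i = j) :
    0 ≤ wsumW w g k h := by
  obtain ⟨hper, hS, hA⟩ := hgw
  have hXmem : ∀ i, h i ∈ X := fun i => (mem_SS.mp (hS i)).1
  have hgX : ∀ v, v ∈ X → g v ∉ X := fun v hv => side hX (hg.2 v) hv
  set T : Finset V := (Finset.range k).image h with hT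
  have hTmem : ∀ v, v ∈ T ↔ ∃ i, i < k ∧ h i = v := by
    intro v; simp [hT, Finset.mem_image, Finset.mem_range]
  have hval : ∀ i, h i ∈ T := by
    intro i
    exact (hTmem _).mpr ⟨i % k, Nat.mod_lt _ hk, (periodic_mod hk hper i).symm⟩
  have hmodeq : ∀ i, i < k → (i + 1) % k = if i + 1 = k then 0 else i + 1 := by
    intro i hik
    by_cases hik1 : i + 1 = k
    · simp [hik1, Nat.mod_self]
    · rw [if_neg hik1]; exact Nat.mod_eq_of_lt (by omega)
  have hsinj : ∀ i j, i < k → j < k → h (i+1) = h (j+1) → i = j := by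
    intro i j hik hjk heq
    rw [periodic_mod hk hper (i+1), periodic_mod hk hper (j+1)] at heq
    have := hinj _ _ (Nat.mod_lt _ hk) (Nat.mod_lt _ hk) heq
    rw [hmodeq i hik, hmodeq j hjk] at this
    split_ifs at this <;> omega
  set nxt : V → V := fun v =>
    if hv : ∃ i, i < k ∧ h i = v then h (Classical.choose hv + 1) else v with hnxtdef
  have hnxt : ∀ i, i < k → nxt (h i) = h (i + 1) := by
    intro i hik
    have hv : ∃ j, j < k ∧ h j = h i := ⟨i, hik, rfl⟩
    simp only [hnxtdef, dif_pos hv]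
    obtain ⟨hj1, hj2⟩ := Classical.choose_spec hv
    rw [hinj _ _ hj1 hik hj2]
  set prv : V → V := fun v =>
    if hv : ∃ i, i < k ∧ h (i+1) = v then h (Classical.choose hv) else v with hprvdef
  have hprv : ∀ i, i < k → prv (h (i + 1)) = h i := by
    intro i hik
    have hv : ∃ j, j < k ∧ h (j+1) = h (i+1) := ⟨i, hik, rfl⟩
    simp only [hprvdef, dif_pos hv]
    obtain ⟨hj1, hj2⟩ := Classical.choose_spec hv
    rw [hsinj _ _ hj1 hik hj2]
  have hTX : ∀ v, v ∈ T → v ∈ X := by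
    intro v hv; obtain ⟨i, _, rfl⟩ := (hTmem v).mp hv; exact hXmem i
  have hTS : ∀ v, v ∈ T → v ∈ SS X g F₀ := by
    intro v hv; obtain ⟨i, _, rfl⟩ := (hTmem v).mp hv; exact hS i
  have hgvT : ∀ v, v ∈ T → g v ∉ T := by
    intro v hv hgv
    exact (hgX v (hTX v hv)) (hTX _ hgv)
  have hTsucc : ∀ v, v ∈ T → ∃ i, i < k ∧ h (i + 1) = v := by
    intro v hv
    obtain ⟨j, hjk, rfl⟩ := (hTmem v).mp hv
    rcases Nat.eq_zero_or_pos j with rfl | hj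
    · refine ⟨k - 1, by omega, ?_⟩
      rw [show k - 1 + 1 = 0 + k by omega, hper]
    · exact ⟨j - 1, by omega, by rw [show j - 1 + 1 = j by omega]⟩
  set f' : V → V := fun v =>
    if v ∈ T then g (nxt v) else if g v ∈ T then prv (g v) else g v with hf'def
  have hf'T : ∀ i, i < k → f' (h i) = g (h (i + 1)) := by
    intro i hik
    simp only [hf'def, if_pos (hval i)]
    rw [hnxt i hik]
  have hf'B : ∀ v, v ∉ T → g v ∈ T → f' v = prv (g v) := by
    intro v h1 h2; simp only [hf'def, if_neg h1, if_pos h2]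
  have hf'C : ∀ v, v ∉ T → g v ∉ T → f' v = g v := by
    intro v h1 h2; simp only [hf'def, if_neg h1, if_neg h2]
  have hsuccT : ∀ i, h (i+1) ∈ T := fun i => hval (i+1)
  have hinvol : Function.Involutive f' := by
    intro v
    by_cases hvT : v ∈ T
    · obtain ⟨i, hik, rfl⟩ := (hTmem v).mp hvT
      rw [hf'T i hik]
      have h1 : g (h (i+1)) ∉ T := by
        intro hc
        exact (hgX _ (hTX _ (hsuccT i))) (hTX _ hc)
      have h2 : g (g (h (i+1))) ∈ T := by rw [hg.1]; exact hsuccT i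
      rw [hf'B _ h1 h2, hg.1, hprv i hik]
    · by_cases hgvT' : g v ∈ T
      · obtain ⟨i, hik, hi⟩ := hTsucc (g v) hgvT'
        rw [hf'B v hvT hgvT', ← hi, hprv i hik, hf'T i hik, hi, hg.1]
      · rw [hf'C v hvT hgvT']
        have h1 : g v ∉ T := hgvT'
        have h2 : g (g v) ∉ T := by rw [hg.1]; exact hvT
        rw [hf'C _ h1 h2, hg.1]
  have hadj : ∀ v, G.Adj v (f' v) := by
    intro v
    by_cases hvT : v ∈ T
    · obtain ⟨i, hik, rfl⟩ := (hTmem v).mp hvT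
      rw [hf'T i hik]
      rcases hA i with heq | hadj
      · rw [← heq]; exact hg.2 _
      · exact hadj
    · by_cases hgvT' : g v ∈ T
      · obtain ⟨i, hik, hi⟩ := hTsucc (g v) hgvT'
        rw [hf'B v hvT hgvT', ← hi, hprv i hik]
        rcases hA i with heq | hadj
        · rw [heq, hi]; exact hg.2 v
        · have : g (h (i+1)) = v := by rw [hi, hg.1]
          rw [this] at hadj
          exact hadj.symm
      · rw [hf'C v hvT hgvT']; exact hg.2 v
  have hf' : IsInv G f' := ⟨hinvol, hadj⟩
  have hF₀f' : F₀ ⊆ Mof f' := by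
    intro e he
    obtain ⟨v, rfl⟩ := mem_Mof.mp (hFg he)
    have hvT : v ∉ T := by
      intro hc
      exact (mem_SS.mp (hTS v hc)).2 he
    have hgvT' : g v ∉ T := by
      intro hc
      have := (mem_SS.mp (hTS _ hc)).2
      rw [hg.1] at this
      exact this (by rwa [Sym2.eq_swap])
    exact mem_Mof.mpr ⟨v, by rw [hf'C v hvT hgvT']⟩
  have hTXF : T ⊆ XF X := fun v hv => mem_XF.mpr (hTX v hv)
  have key : wt w (Mof f') - wt w (Mof g) = wsumW w g k h := by
    rw [wt_Mof w hX hf', wt_Mof w hX hg]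
    rw [← Finset.sum_sdiff hTXF (f := fun v => w s(v, f' v)),
        ← Finset.sum_sdiff hTXF (f := fun v => w s(v, g v))]
    have hsame : ∀ v ∈ XF X \ T, w s(v, f' v) = w s(v, g v) := by
      intro v hv
      rw [Finset.mem_sdiff] at hv
      have h1 : g v ∉ T := by
        intro hc
        exact (hgX v (mem_XF.mp hv.1)) (hTX _ hc)
      rw [hf'C v hv.2 h1]
    rw [Finset.sum_congr rfl hsame]
    have hinj' : ∀ x ∈ Finset.range k, ∀ y ∈ Finset.range k, h x = h y → x = y := by
      intro x hx y hy
      exact hinj x y (Finset.mem_range.mp hx) (Finset.mem_range.mp hy)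
    rw [hT, Finset.sum_image hinj' (f := fun v => w s(v, f' v)),
        Finset.sum_image hinj' (f := fun v => w s(v, g v))]
    have e1 : ∀ i ∈ Finset.range k, w s(h i, f' (h i)) = w s(h i, g (h (i+1))) := by
      intro i hi
      rw [hf'T i (Finset.mem_range.mp hi)]
    rw [Finset.sum_congr rfl e1]
    have e2 : ∑ i ∈ Finset.range k, w s(h i, g (h i))
        = ∑ i ∈ Finset.range k, w s(h (i+1), g (h (i+1))) := by
      have hq : ∀ i, w s(h (i + k), g (h (i + k))) = w s(h i, g (h i)) := by
        intro i; rw [hper i]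
      exact (sum_shift (fun i => w s(h i, g (h i))) k hq 1).symm
    rw [wsumW]
    simp only [lenw]
    rw [Finset.sum_sub_distrib]
    rw [← e2]
    ring
  have := hmin (Mof f') (Mof_isPM hf') hF₀f'
  unfold lenw at key
  omega

end Cyc


section Walks

variable {G : SimpleGraph V} {w : Sym2 V → ℤ} {X : Set V} {g : V → V} {F₀ : Finset (Sym2 V)}

lemma walk_nonneg (hX : ∀ u v, G.Adj u v → (u ∈ X ↔ v ∉ X))
    (hg : IsInv G g) (hFg : F₀ ⊆ Mof g)
    (hmin : ∀ P, IsPM G P → F₀ ⊆ P → wt w (Mof g) ≤ wt w P) :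
    ∀ k, 0 < k → ∀ h : ℕ → V, GW G X g F₀ k h → 0 ≤ wsumW w g k h := by
  intro k
  induction k using Nat.strong_induction_on with
  | _ k IH =>
    intro hk h hgw
    by_cases hinj : ∀ i j, i < k → j < k → h i = h j → i = j
    · exact cycle_nonneg hX hg hFg hmin hk hgw hinj
    · push_neg at hinj
      obtain ⟨i, j, hik, hjk, heq, hne⟩ := hinj
      obtain ⟨hper, hS, hA⟩ := hgw
      set a := min i j with ha
      set b := max i j with hb
      have hab : a < b := by omega
      have hbk : b < k := by omega
      have heq' : h a = h b := by
        rcases Nat.lt_or_ge i j with hij | hij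
        · rw [show a = i by omega, show b = j by omega]; exact heq
        · rw [show a = j by omega, show b = i by omega]; exact heq.symm
      set d := b - a with hd
      have hd0 : 0 < d := by omega
      have hdk : d < k := by omega
      set h' : ℕ → V := fun n => h (n + a) with hh'
      have hper' : ∀ n, h' (n + k) = h' n := by
        intro n; simp only [hh']
        rw [show n + k + a = (n + a) + k by omega, hper]
      have hS' : ∀ n, h' n ∈ SS X g F₀ := fun n => hS _
      have hA' : ∀ n, AllW G g (h' n) (h' (n + 1)) := by
        intro n; simp only [hh']
        rw [show n + 1 + a = (n + a) + 1 by omega]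
        exact hA (n + a)
      have hq : ∀ n, lenw w g (h (n + k)) (h (n + k + 1)) = lenw w g (h n) (h (n + 1)) := by
        intro n
        rw [hper, show n + k + 1 = (n + 1) + k by omega, hper]
      have hsum' : wsumW w g k h' = wsumW w g k h := by
        unfold wsumW
        calc ∑ n ∈ Finset.range k, lenw w g (h' n) (h' (n+1))
            = ∑ n ∈ Finset.range k, lenw w g (h (n + a)) (h ((n + a) + 1)) := by
              apply Finset.sum_congr rfl; intro n _
              simp only [hh']
              rw [show n + 1 + a = (n + a) + 1 by omega]
          _ = ∑ n ∈ Finset.range k, lenw w g (h n) (h (n+1)) :=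
              sum_shift (fun n => lenw w g (h n) (h (n+1))) k hq a
      have h0d : h' 0 = h' d := by
        simp only [hh']
        rw [show (0:ℕ) + a = a by omega, show d + a = b by omega]
        exact heq'
      -- first piece
      set h₁ : ℕ → V := fun n => h' (n % d) with hh₁
      have hval₁ : ∀ n, h₁ (n + 1) = h' (n % d + 1) := by
        intro n
        simp only [hh₁]
        rw [succ_mod hd0 n]
        split
        · next hcase =>
          rw [hcase]
          exact h0d
        · rfl
      have hgw₁ : GW G X g F₀ d h₁ := by
        refine ⟨fun n => by simp only [hh₁, Nat.add_mod_right], fun n => hS' _, fun n => ?_⟩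
        rw [hval₁ n]
        exact hA' (n % d)
      have hsum₁ : wsumW w g d h₁ = ∑ n ∈ Finset.range d, lenw w g (h' n) (h' (n + 1)) := by
        unfold wsumW
        apply Finset.sum_congr rfl
        intro n hn
        rw [hval₁ n]
        simp only [hh₁]
        rw [Nat.mod_eq_of_lt (Finset.mem_range.mp hn)]
      -- second piece
      set e := k - d with he
      have he0 : 0 < e := by omega
      set h₂ : ℕ → V := fun n => h' (d + n % e) with hh₂
      have hval₂ : ∀ n, h₂ (n + 1) = h' (d + n % e + 1) := by
        intro n
        simp only [hh₂]
        rw [succ_mod he0 n]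
        split
        · next hcase =>
          have h1 : d + n % e + 1 = k := by omega
          have h2 : h' k = h' d := by
            rw [show k = 0 + k by omega, hper', h0d]
          rw [h1, h2]
          norm_num
        · rfl
      have hgw₂ : GW G X g F₀ e h₂ := by
        refine ⟨fun n => by simp only [hh₂, Nat.add_mod_right], fun n => hS' _, fun n => ?_⟩
        rw [hval₂ n]
        exact hA' (d + n % e)
      have hsum₂ : wsumW w g e h₂ = ∑ n ∈ Finset.range e, lenw w g (h' (d + n)) (h' (d + n + 1)) := by
        unfold wsumW
        apply Finset.sum_congr rfl
        intro n hn
        rw [hval₂ n]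
        simp only [hh₂]
        rw [Nat.mod_eq_of_lt (Finset.mem_range.mp hn)]
      have hsplit : wsumW w g k h' = wsumW w g d h₁ + wsumW w g e h₂ := by
        rw [hsum₁, hsum₂]
        unfold wsumW
        rw [show k = d + e by omega]
        exact sum_range_add' (fun n => lenw w g (h' n) (h' (n+1))) d e
      have r₁ := IH d hdk hd0 h₁ hgw₁
      have r₂ := IH e (by omega) he0 h₂ hgw₂
      rw [← hsum', hsplit]
      omega

def OW (G : SimpleGraph V) (X : Set V) (g : V → V) (F₀ : Finset (Sym2 V))
    (a b : V) (m : ℕ) (h : ℕ → V) : Prop :=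
  h 0 = a ∧ h m = b ∧
    ∀ i < m, h i ∈ SS X g F₀ ∧ h (i+1) ∈ SS X g F₀ ∧ AllW G g (h i) (h (i+1))

lemma OW_closed_nonneg (hX : ∀ u v, G.Adj u v → (u ∈ X ↔ v ∉ X))
    (hg : IsInv G g) (hFg : F₀ ⊆ Mof g)
    (hmin : ∀ P, IsPM G P → F₀ ⊆ P → wt w (Mof g) ≤ wt w P)
    {a : V} {m : ℕ} {h : ℕ → V} (hm : 0 < m) (how : OW G X g F₀ a a m h) :
    0 ≤ wsumW w g m h := by
  obtain ⟨h0, hma, hcond⟩ := how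
  set h' : ℕ → V := fun n => h (n % m) with hh'
  have hvm : h m = h 0 := by rw [h0, hma]
  have hval : ∀ n, h' (n + 1) = h ((n % m) + 1) := by
    intro n
    simp only [hh']
    rw [succ_mod hm n]
    split
    · next hcase => rw [hcase]; exact hvm.symm
    · rfl
  have hgw : GW G X g F₀ m h' := by
    refine ⟨fun n => by simp only [hh', Nat.add_mod_right], fun n => ?_, fun n => ?_⟩
    · simp only [hh']
      exact (hcond _ (Nat.mod_lt _ hm)).1
    · rw [hval n]
      simp only [hh']
      exact (hcond _ (Nat.mod_lt _ hm)).2.2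
  have hsum : wsumW w g m h' = wsumW w g m h := by
    unfold wsumW
    apply Finset.sum_congr rfl
    intro n hn
    have hnm := Finset.mem_range.mp hn
    rw [hval n]
    simp only [hh']
    rw [Nat.mod_eq_of_lt hnm]
  rw [← hsum]
  exact walk_nonneg hX hg hFg hmin m hm h' hgw

lemma OW_concat {a b c : V} {m m' : ℕ} {h h' : ℕ → V}
    (h1 : OW G X g F₀ a b m h) (h2 : OW G X g F₀ b c m' h') :
    ∃ h'', OW G X g F₀ a c (m + m') h'' ∧
      wsumW w g (m + m') h'' = wsumW w g m h + wsumW w g m' h' := by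
  obtain ⟨h10, h1m, h1c⟩ := h1
  obtain ⟨h20, h2m, h2c⟩ := h2
  set h'' : ℕ → V := fun i => if i < m then h i else h' (i - m) with hh''
  have hv1 : ∀ i, i ≤ m → h'' i = h i := by
    intro i hi
    rcases Nat.lt_or_ge i m with hlt | hge
    · simp only [hh'', if_pos hlt]
    · have hieq : i = m := by omega
      rw [hieq]
      simp only [hh'', if_neg (lt_irrefl m), Nat.sub_self]
      rw [h20, h1m]
  have hv2 : ∀ i, h'' (m + i) = h' i := by
    intro i
    simp only [hh'', if_neg (by omega : ¬ (m + i < m))]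
    congr 1
    omega
  refine ⟨h'', ⟨?_, ?_, ?_⟩, ?_⟩
  · rw [hv1 0 (by omega), h10]
  · rw [show m + m' = m + m' by rfl, hv2 m', h2m]
  · intro i hi
    rcases Nat.lt_or_ge i m with hlt | hge
    · rw [hv1 i (by omega), hv1 (i+1) (by omega)]
      exact h1c i hlt
    · have e1 : h'' i = h' (i - m) := by
        conv_lhs => rw [show i = m + (i - m) by omega]
        exact hv2 _
      have e2 : h'' (i + 1) = h' ((i - m) + 1) := by
        conv_lhs => rw [show i + 1 = m + ((i - m) + 1) by omega]
        exact hv2 _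
      rw [e1, e2]
      exact h2c (i - m) (by omega)
  · unfold wsumW
    rw [sum_range_add' (fun i => lenw w g (h'' i) (h'' (i+1))) m m']
    congr 1
    · apply Finset.sum_congr rfl
      intro i hi
      have him := Finset.mem_range.mp hi
      rw [hv1 i (by omega), hv1 (i+1) (by omega)]
    · apply Finset.sum_congr rfl
      intro i hi
      rw [show m + i + 1 = m + (i + 1) by omega, hv2 i, hv2 (i+1)]

lemma OW_tail {a : V} {m : ℕ} {h : ℕ → V} (how : OW G X g F₀ a a m h) (hm : 1 ≤ m) :
    OW G X g F₀ (h 1) a (m - 1) (fun n => h (n + 1)) ∧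
      wsumW w g (m - 1) (fun n => h (n + 1)) = wsumW w g m h - lenw w g a (h 1) := by
  obtain ⟨h0, hma, hc⟩ := how
  constructor
  · refine ⟨rfl, ?_, ?_⟩
    · simp only
      rw [show m - 1 + 1 = m by omega, hma]
    · intro i hi
      exact hc (i + 1) (by omega)
  · unfold wsumW
    have := Finset.sum_range_succ' (fun i => lenw w g (h i) (h (i+1))) (m - 1)
    rw [show m - 1 + 1 = m by omega] at this
    simp only at this ⊢
    rw [this, h0]
    ring

end Walks

section Orbits

variable (π : Equiv.Perm V)

lemma exists_per (x : V) : ∃ n, 0 < n ∧ π^[n] x = x := by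
  refine ⟨orderOf π, orderOf_pos π, ?_⟩
  rw [← Equiv.Perm.coe_pow, pow_orderOf_eq_one]
  rfl

noncomputable def per (x : V) : ℕ := Nat.find (exists_per π x)

lemma per_pos (x : V) : 0 < per π x := (Nat.find_spec (exists_per π x)).1

lemma per_iter (x : V) : π^[per π x] x = x := (Nat.find_spec (exists_per π x)).2

lemma per_min (x : V) {n : ℕ} (h0 : 0 < n) (hn : n < per π x) : π^[n] x ≠ x := by
  intro hc
  exact Nat.find_min (exists_per π x) hn ⟨h0, hc⟩

lemma iter_periodic (x : V) : ∀ i, π^[i + per π x] x = π^[i] x := by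
  intro i
  rw [Function.iterate_add_apply, per_iter]

lemma iter_mod (x : V) (n : ℕ) : π^[n] x = π^[n % per π x] x :=
  periodic_mod (h := fun n => π^[n] x) (per_pos π x) (iter_periodic π x) n

lemma inj_per (x : V) : ∀ i j, i < per π x → j < per π x → π^[i] x = π^[j] x → i = j := by
  have key : ∀ i j, i ≤ j → j < per π x → π^[i] x = π^[j] x → i = j := by
    intro i j hij hjp heq
    have h1 : π^[i] (π^[j - i] x) = π^[i] x := by
      rw [← Function.iterate_add_apply, show i + (j - i) = j by omega, heq]
    have h2 : π^[j - i] x = x := (π.injective.iterate i) h1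
    by_contra hne
    exact per_min π x (by omega) (by omega) h2
  intro i j hip hjp heq
  rcases le_or_gt i j with h | h
  · exact key i j h hjp heq
  · exact (key j i (by omega) hip heq.symm).symm

noncomputable def Orb (x : V) : Finset V := (Finset.range (per π x)).image (π^[·] x)

lemma mem_Orb {x v : V} : v ∈ Orb π x ↔ ∃ i, i < per π x ∧ π^[i] x = v := by
  simp [Orb, Finset.mem_image]

lemma iter_mem_Orb (x : V) (n : ℕ) : π^[n] x ∈ Orb π x :=
  (mem_Orb π).mpr ⟨n % per π x, Nat.mod_lt _ (per_pos π x), (iter_mod π x n).symm⟩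

lemma self_mem_Orb (x : V) : x ∈ Orb π x := iter_mem_Orb π x 0

lemma orb_succ {x v : V} (hv : v ∈ Orb π x) : π v ∈ Orb π x := by
  obtain ⟨i, _, rfl⟩ := (mem_Orb π).mp hv
  rw [← Function.iterate_succ_apply' π i x]
  exact iter_mem_Orb π x (i + 1)

lemma orb_pre {x v : V} (hv : π v ∈ Orb π x) : v ∈ Orb π x := by
  obtain ⟨i, hip, hi⟩ := (mem_Orb π).mp hv
  rcases Nat.eq_zero_or_pos i with rfl | hi0
  · have h1 : π v = π^[per π x] x := by rw [per_iter]; exact hi.symm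
    rw [show per π x = (per π x - 1) + 1 by have := per_pos π x; omega,
      Function.iterate_succ_apply' π _ x] at h1
    have := π.injective h1
    rw [this]
    exact iter_mem_Orb π x _
  · have h1 : π v = π (π^[i-1] x) := by
      rw [← Function.iterate_succ_apply' π (i-1) x]
      rw [show (i-1).succ = i by omega]
      exact hi.symm
    rw [π.injective h1]
    exact iter_mem_Orb π x _

lemma orb_sub {x v : V} (hv : v ∈ Orb π x) : Orb π v ⊆ Orb π x := by
  obtain ⟨i, _, rfl⟩ := (mem_Orb π).mp hv
  intro u hu
  obtain ⟨j, _, rfl⟩ := (mem_Orb π).mp hu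
  rw [← Function.iterate_add_apply]
  exact iter_mem_Orb π x _

lemma orb_eq {x v : V} (hv : v ∈ Orb π x) : Orb π v = Orb π x := by
  obtain ⟨i, hip, hiv⟩ := (mem_Orb π).mp hv
  have hx : x ∈ Orb π v := by
    have h1 : π^[per π x - i] v = x := by
      rw [← hiv, ← Function.iterate_add_apply, show per π x - i + i = per π x by omega,
        per_iter]
    rw [← h1]
    exact iter_mem_Orb π v _
  exact subset_antisymm (orb_sub π hv) (orb_sub π hx)

lemma orb_fix {x : V} (hx : π x = x) : Orb π x = {x} := by
  have h1 : per π x ≤ 1 := Nat.find_le ⟨by omega, by simpa using hx⟩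
  have h2 : per π x = 1 := by have := per_pos π x; omega
  rw [Orb, h2]
  simp

lemma orb_nonfix {x : V} (hx : π x ≠ x) {v : V} (hv : v ∈ Orb π x) : π v ≠ v := by
  intro hc
  have h1 : Orb π v = {v} := orb_fix π hc
  have h2 : x ∈ Orb π v := by
    rw [orb_eq π hv]
    exact self_mem_Orb π x
  rw [h1, Finset.mem_singleton] at h2
  rw [h2] at hx
  exact hx hc

lemma sum_Orb (q : V → ℤ) (x : V) :
    ∑ v ∈ Orb π x, q v = ∑ i ∈ Finset.range (per π x), q (π^[i] x) := by
  rw [Orb]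
  exact Finset.sum_image (fun i hi j hj heq =>
    inj_per π x i j (Finset.mem_range.mp hi) (Finset.mem_range.mp hj) heq)

lemma iter_mem_inv {A : Finset V} (hinv : ∀ v ∈ A, π v ∈ A) {x : V} (hx : x ∈ A) :
    ∀ n, π^[n] x ∈ A := by
  intro n
  induction n with
  | zero => exact hx
  | succ n IH => rw [Function.iterate_succ_apply']; exact hinv _ IH

lemma inv_sum (q : V → ℤ) :
    ∀ A : Finset V, (∀ v ∈ A, π v ∈ A) → (∀ x ∈ A, ∑ v ∈ Orb π x, q v ≤ 0) →
      ∑ v ∈ A, q v ≤ 0 := by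
  intro A
  induction A using Finset.strongInduction with
  | _ A IH =>
    intro hinv hsum
    rcases Finset.eq_empty_or_nonempty A with rfl | ⟨x, hx⟩
    · simp
    · have hOrbA : Orb π x ⊆ A := by
        intro v hv
        obtain ⟨i, _, rfl⟩ := (mem_Orb π).mp hv
        exact iter_mem_inv π hinv hx i
      have hsd := Finset.sum_sdiff (f := q) hOrbA
      have h1 : ∑ v ∈ Orb π x, q v ≤ 0 := hsum x hx
      have h2 : ∑ v ∈ A \ Orb π x, q v ≤ 0 := by
        apply IH _ (Finset.sdiff_ssubset hOrbA ⟨x, self_mem_Orb π x⟩)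
        · intro v hv
          rw [Finset.mem_sdiff] at hv ⊢
          refine ⟨hinv _ hv.1, fun hc => hv.2 (orb_pre π hc)⟩
        · intro y hy
          exact hsum y (Finset.mem_sdiff.mp hy).1
      omega

end Orbits

noncomputable def permOf (g f : V → V) (hg : Function.Involutive g)
    (hf : Function.Involutive f) : Equiv.Perm V :=
  (Function.Involutive.toPerm f hf).trans (Function.Involutive.toPerm g hg)

lemma permOf_apply {g f : V → V} {hg : Function.Involutive g} {hf : Function.Involutive f}
    (v : V) : permOf g f hg hf v = g (f v) := rfl

section Key

variable {G : SimpleGraph V} {w : Sym2 V → ℤ} {X : Set V} {g f : V → V}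
  {F₀ : Finset (Sym2 V)}

lemma permOf_X (hX : ∀ u v, G.Adj u v → (u ∈ X ↔ v ∉ X))
    (hg : IsInv G g) (hf : IsInv G f) {v : V} (hv : v ∈ X) :
    permOf g f hg.1 hf.1 v ∈ X := by
  rw [permOf_apply]
  exact side' hX (hg.2 (f v)) (side hX (hf.2 v) hv)

lemma permOf_iter_X (hX : ∀ u v, G.Adj u v → (u ∈ X ↔ v ∉ X))
    (hg : IsInv G g) (hf : IsInv G f) {v : V} (hv : v ∈ X) :
    ∀ n, (permOf g f hg.1 hf.1)^[n] v ∈ X := by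
  intro n
  induction n with
  | zero => exact hv
  | succ n IH =>
    rw [Function.iterate_succ_apply']
    exact permOf_X hX hg hf IH

lemma permOf_SS (hg : IsInv G g) (hf : IsInv G f)
    (hFf : F₀ ⊆ Mof f) {v : V} (hv : v ∈ X)
    (hnf : permOf g f hg.1 hf.1 v ≠ v) : v ∈ SS X g F₀ := by
  refine mem_SS.mpr ⟨hv, fun hc => ?_⟩
  have h1 : f v = g v := Mof_eq hf (hFf hc) (hg.2 v).ne
  apply hnf
  rw [permOf_apply, h1, hg.1]

lemma permOf_arc (hg : IsInv G g) (hf : IsInv G f) (v : V) :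
    AllW G g v (permOf g f hg.1 hf.1 v) := by
  right
  rw [permOf_apply, hg.1]
  exact hf.2 v

lemma orbit_GW (hX : ∀ u v, G.Adj u v → (u ∈ X ↔ v ∉ X))
    (hg : IsInv G g) (hf : IsInv G f) (hFf : F₀ ⊆ Mof f)
    {x : V} (hx : x ∈ X) (hnf : permOf g f hg.1 hf.1 x ≠ x) :
    GW G X g F₀ (per (permOf g f hg.1 hf.1) x) (fun n => (permOf g f hg.1 hf.1)^[n] x) := by
  set π := permOf g f hg.1 hf.1 with hπ
  refine ⟨iter_periodic π x, fun n => ?_, fun n => ?_⟩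
  · exact permOf_SS hg hf hFf (permOf_iter_X hX hg hf hx n)
      (orb_nonfix π hnf (iter_mem_Orb π x n))
  · simp only
    rw [Function.iterate_succ_apply' π n x]
    exact permOf_arc hg hf _

lemma orb_wsum (π : Equiv.Perm V) (x : V) (w : Sym2 V → ℤ) (g : V → V) :
    wsumW w g (per π x) (fun n => π^[n] x) = ∑ v ∈ Orb π x, lenw w g v (π v) := by
  rw [sum_Orb π (fun v => lenw w g v (π v)) x]
  unfold wsumW
  apply Finset.sum_congr rfl
  intro i _
  simp only
  rw [Function.iterate_succ_apply' π i x]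

lemma total_diff (hX : ∀ u v, G.Adj u v → (u ∈ X ↔ v ∉ X))
    (hg : IsInv G g) (hf : IsInv G f) (w : Sym2 V → ℤ) :
    wt w (Mof f) - wt w (Mof g) = ∑ v ∈ XF X, lenw w g v (permOf g f hg.1 hf.1 v) := by
  set π := permOf g f hg.1 hf.1 with hπ
  have hterm : ∀ v, lenw w g v (π v) = w s(v, f v) - w s(π v, g (π v)) := by
    intro v
    unfold lenw
    congr 2
    rw [hπ, permOf_apply, hg.1]
  have hre : ∑ v ∈ XF X, w s(π v, g (π v)) = ∑ v ∈ XF X, w s(v, g v) := by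
    refine Finset.sum_nbij (fun v => π v) ?_ ?_ ?_ ?_
    · intro a ha
      rw [mem_XF] at ha ⊢
      exact permOf_X hX hg hf ha
    · exact fun a _ b _ hab => π.injective hab
    · intro v hv
      simp only [Finset.coe_filter, Set.mem_setOf_eq, Finset.mem_coe] at hv ⊢
      have hvX : v ∈ X := by
        simpa [XF] using hv
      refine ⟨f (g v), ?_, ?_⟩
      · have h1 : g v ∉ X := side hX (hg.2 v) hvX
        have h2 : f (g v) ∈ X := side' hX (hf.2 (g v)) h1
        simpa [XF] using h2
      · show permOf g f hg.1 hf.1 (f (g v)) = v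
        rw [permOf_apply, hf.1, hg.1]
    · intro a _; rfl
  calc wt w (Mof f) - wt w (Mof g)
      = ∑ v ∈ XF X, w s(v, f v) - ∑ v ∈ XF X, w s(π v, g (π v)) := by
        rw [wt_Mof w hX hf, wt_Mof w hX hg, hre]
    _ = ∑ v ∈ XF X, (w s(v, f v) - w s(π v, g (π v))) := by rw [Finset.sum_sub_distrib]
    _ = ∑ v ∈ XF X, lenw w g v (π v) := by
        apply Finset.sum_congr rfl
        intro v _
        rw [hterm v]

lemma key (hX : ∀ u v, G.Adj u v → (u ∈ X ↔ v ∉ X))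
    {F₀ M N₀ : Finset (Sym2 V)} (hM : IsPM G M) (hN : IsPM G N₀)
    (hFM : F₀ ⊆ M) (hFN : F₀ ⊆ N₀)
    (hmin : ∀ P, IsPM G P → F₀ ⊆ P → wt w N₀ ≤ wt w P)
    (hlt : wt w N₀ < wt w M) :
    ∃ e ∈ M, e ∉ F₀ ∧ ∀ P, IsPM G P → F₀ ⊆ P → e ∈ P → wt w N₀ < wt w P := by
  obtain ⟨g, hg, rfl⟩ := exists_inv hN
  obtain ⟨p, hp, rfl⟩ := exists_inv hM
  by_contra hcon
  push_neg at hcon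
  -- hcon : ∀ e ∈ Mof p, e ∉ F₀ → ∃ P, IsPM G P ∧ F₀ ⊆ P ∧ e ∈ P ∧ wt w P ≤ wt w (Mof g)
  set π := permOf g p hg.1 hp.1 with hπ
  set q : V → ℤ := fun v => lenw w g v (π v) with hq
  -- every orbit has nonpositive sum
  have horb : ∀ x ∈ XF X, ∑ v ∈ Orb π x, q v ≤ 0 := by
    intro x hxX
    rw [mem_XF] at hxX
    by_cases hfx : π x = x
    · rw [orb_fix π hfx, Finset.sum_singleton, hq]
      simp only
      rw [hfx]
      simp [lenw]
    · -- zero walks through every arc of the orbit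
      have hzero : ∀ v ∈ Orb π x, ∃ m h, 2 ≤ m ∧ OW G X g F₀ v v m h ∧
          wsumW w g m h = 0 ∧ h 1 = π v := by
        intro v hv
        have hvX : v ∈ X := by
          obtain ⟨i, _, rfl⟩ := (mem_Orb π).mp hv
          exact permOf_iter_X hX hg hp hxX i
        have hvnf : π v ≠ v := orb_nonfix π hfx hv
        have hvp : v ≠ p v := (hp.2 v).ne
        have heM : s(v, p v) ∈ Mof p := mem_Mof.mpr ⟨v, rfl⟩
        have heF : s(v, p v) ∉ F₀ := by
          intro hc
          have h1 : g v = p v := Mof_eq hg (hFN hc) hvp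
          apply hvnf
          rw [hπ, permOf_apply, ← h1, hg.1]
        obtain ⟨P, hP, hFP, hePv, hwle⟩ := hcon _ heM heF
        have hweq : wt w P = wt w (Mof g) := le_antisymm hwle (hmin P hP hFP)
        obtain ⟨ρ, hρ, rfl⟩ := exists_inv hP
        have hρv : ρ v = p v := Mof_eq hρ hePv hvp
        set πρ := permOf g ρ hg.1 hρ.1 with hπρ
        have hπρv : πρ v = π v := by
          rw [hπρ, hπ, permOf_apply, permOf_apply, hρv]
        have hρnf : πρ v ≠ v := by rw [hπρv]; exact hvnf
        set qρ : V → ℤ := fun u => lenw w g u (πρ u) with hqρ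
        -- total is zero
        have htot : ∑ u ∈ XF X, qρ u = 0 := by
          have := total_diff hX hg hρ w
          rw [hweq] at this
          simp only [sub_self] at this
          rw [← hπρ] at this
          exact this.symm ▸ rfl
        -- all orbits of πρ have nonnegative sum
        have hnn : ∀ y, y ∈ X → 0 ≤ ∑ u ∈ Orb πρ y, qρ u := by
          intro y hyX
          by_cases hfy : πρ y = y
          · rw [orb_fix πρ hfy, Finset.sum_singleton, hqρ]
            simp only
            rw [hfy]
            simp [lenw]
          · rw [← orb_wsum πρ y w g]
            exact cycle_nonneg hX hg hFN hmin (per_pos πρ y)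
              (orbit_GW hX hg hρ hFP hyX hfy) (inj_per πρ y)
        -- orbit of v has nonpositive sum (hence zero)
        have hOrbXF : Orb πρ v ⊆ XF X := by
          intro u hu
          obtain ⟨i, _, rfl⟩ := (mem_Orb πρ).mp hu
          exact mem_XF.mpr (permOf_iter_X hX hg hρ hvX i)
        have hrest : 0 ≤ ∑ u ∈ XF X \ Orb πρ v, qρ u := by
          have := inv_sum πρ (fun u => -(qρ u)) (XF X \ Orb πρ v) ?_ ?_
          · simp only [Finset.sum_neg_distrib] at this
            omega
          · intro u hu
            rw [Finset.mem_sdiff] at hu ⊢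
            refine ⟨?_, fun hc => hu.2 (orb_pre πρ hc)⟩
            exact mem_XF.mpr (permOf_X hX hg hρ (mem_XF.mp hu.1))
          · intro y hy
            rw [Finset.mem_sdiff] at hy
            have := hnn y (mem_XF.mp hy.1)
            rw [Finset.sum_neg_distrib]
            omega
        have hOrbsum : ∑ u ∈ Orb πρ v, qρ u = 0 := by
          have hsd := Finset.sum_sdiff (f := qρ) hOrbXF
          have h1 := hnn v hvX
          omega
        -- build the zero walk
        have hm2 : 2 ≤ per πρ v := by
          have h1 := per_pos πρ v
          rcases Nat.lt_or_ge (per πρ v) 2 with h2 | h2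
          · exfalso
            have h3 : per πρ v = 1 := by omega
            have h4 := per_iter πρ v
            rw [h3] at h4
            simp at h4
            exact hρnf h4
          · exact h2
        refine ⟨per πρ v, fun n => πρ^[n] v, hm2, ?_, ?_, ?_⟩
        · obtain ⟨hper', hS', hA'⟩ := orbit_GW hX hg hρ hFP hvX hρnf
          exact ⟨rfl, per_iter πρ v, fun i _ => ⟨hS' i, hS' (i+1), hA' i⟩⟩
        · rw [orb_wsum πρ v w g, ← hqρ]
          exact hOrbsum
        · simp only [Function.iterate_one]
          exact hπρv
      -- reverse walk
      have hrev : ∀ j, j ≤ per π x → ∃ m h, j ≤ m ∧ OW G X g F₀ (π^[j] x) x m h ∧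
          wsumW w g m h = -∑ i ∈ Finset.range j, lenw w g (π^[i] x) (π^[i+1] x) := by
        intro j
        induction j with
        | zero =>
          intro _
          refine ⟨0, fun _ => x, by omega, ⟨rfl, rfl, by omega⟩, by simp [wsumW]⟩
        | succ j IH =>
          intro hj
          obtain ⟨m, h, hjm, hW, hWs⟩ := IH (by omega)
          obtain ⟨mz, hz, hmz2, hZ, hZs, hz1⟩ := hzero (π^[j] x) (iter_mem_Orb π x j)
          obtain ⟨hT, hTs⟩ := OW_tail (w := w) hZ (by omega)
          have hz1' : hz 1 = π^[j+1] x := by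
            rw [hz1, Function.iterate_succ_apply']
          rw [hz1'] at hT hTs
          obtain ⟨h'', hW'', hWs''⟩ := OW_concat (w := w) hT hW
          refine ⟨(mz - 1) + m, h'', by omega, hW'', ?_⟩
          rw [hWs'', hTs, hWs, hZs, Finset.sum_range_succ]
          have : lenw w g (π^[j] x) (π^[j+1] x) = lenw w g (π^[j] x) (π (π^[j] x)) := by
            rw [Function.iterate_succ_apply']
          rw [this]
          ring
      obtain ⟨m, h, hjm, hW, hWs⟩ := hrev (per π x) (le_refl _)
      rw [per_iter π x] at hW
      have hpos : 0 < m := by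
        have := per_pos π x
        omega
      have := OW_closed_nonneg hX hg hFN hmin hpos hW
      rw [hWs] at this
      have h2 : ∑ i ∈ Finset.range (per π x), lenw w g (π^[i] x) (π^[i+1] x)
          = ∑ v ∈ Orb π x, q v := by
        rw [← orb_wsum π x w g]
        unfold wsumW
        exact Finset.sum_congr rfl (fun i _ => rfl)
      omega
  -- conclude
  have hinvXF : ∀ v ∈ XF X, π v ∈ XF X := by
    intro v hv
    exact mem_XF.mpr (permOf_X hX hg hp (mem_XF.mp hv))
  have htotal := inv_sum π q (XF X) hinvXF horb
  simp only [hq] at htotal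
  have hdiff := total_diff hX hg hp w
  rw [← hπ] at hdiff
  omega

end Key

section Main

variable (G : SimpleGraph V) (w : Sym2 V → ℤ)

noncomputable def WtsF (F₀ : Finset (Sym2 V)) : Finset ℤ :=
  (Finset.univ.filter (fun P => IsPM G P ∧ F₀ ⊆ P)).image (wt w)

noncomputable def rnkF (F₀ M : Finset (Sym2 V)) : ℕ :=
  ((WtsF G w F₀).filter (· < wt w M)).card

lemma mem_WtsF {F₀ : Finset (Sym2 V)} {v : ℤ} :
    v ∈ WtsF G w F₀ ↔ ∃ P, IsPM G P ∧ F₀ ⊆ P ∧ wt w P = v := by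
  simp [WtsF, and_assoc]

noncomputable def Wts : Finset ℤ := WtsF G w ∅

noncomputable def rnk (M : Finset (Sym2 V)) : ℕ :=
  ((Wts G w).filter (· < wt w M)).card

lemma mem_Wts {v : ℤ} : v ∈ Wts G w ↔ ∃ P, IsPM G P ∧ wt w P = v := by
  simp [Wts, mem_WtsF, Finset.empty_subset]

lemma char : ∀ ℓ : ℕ, 1 ≤ ℓ → ∀ M, NthSmallest G w ℓ M ↔ (IsPM G M ∧ rnk G w M = ℓ - 1) := by
  intro ℓ
  induction ℓ using Nat.strong_induction_on with
  | _ ℓ IH =>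
    intro hℓ M
    have hnone : ∀ P, IsPM G P →
        ((∀ ℓ' : ℕ, 1 ≤ ℓ' → ℓ' < ℓ → ¬ NthSmallest G w ℓ' P) ↔ ℓ - 1 ≤ rnk G w P) := by
      intro P hP
      constructor
      · intro h
        by_contra hr
        push_neg at hr
        have h1 : 1 ≤ rnk G w P + 1 := by omega
        have h2 : rnk G w P + 1 < ℓ := by omega
        exact h _ h1 h2 ((IH _ h2 h1 P).mpr ⟨hP, by omega⟩)
      · intro h ℓ' h1 h2 hN
        have := ((IH _ h2 h1 P).mp hN).2
        omega
    rw [NthSmallest]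
    constructor
    · rintro ⟨hPM, hnot, hmin⟩
      refine ⟨hPM, ?_⟩
      have hge : ℓ - 1 ≤ rnk G w M := (hnone M hPM).mp hnot
      by_contra hne
      have hgt : ℓ - 1 < rnk G w M := by omega
      obtain ⟨v, hvT, hvc⟩ := ex_rank (ℓ - 1) ((Wts G w).filter (· < wt w M)) hgt
      simp only [Finset.mem_filter] at hvT
      obtain ⟨P, hP, hPv⟩ := (mem_Wts G w).mp hvT.1
      have hrP : rnk G w P = ℓ - 1 := by
        rw [rnk, hPv]
        rw [← hvc]
        congr 1
        ext u
        simp only [Finset.mem_filter]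
        constructor
        · rintro ⟨hu, huv⟩; exact ⟨⟨hu, by omega⟩, huv⟩
        · rintro ⟨⟨hu, _⟩, huv⟩; exact ⟨hu, huv⟩
      have := hmin P hP ((hnone P hP).mpr (by omega))
      omega
    · rintro ⟨hPM, hr⟩
      refine ⟨hPM, (hnone M hPM).mpr (by omega), ?_⟩
      intro P hP hno
      have hgeP : ℓ - 1 ≤ rnk G w P := (hnone P hP).mp hno
      by_contra hlt
      push_neg at hlt
      have hsub : (Wts G w).filter (· < wt w P) ⊂ (Wts G w).filter (· < wt w M) := by
        constructor
        · intro u hu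
          simp only [Finset.mem_filter] at hu ⊢
          exact ⟨hu.1, by omega⟩
        · intro hcon
          have hPin : wt w P ∈ (Wts G w).filter (· < wt w M) := by
            simp only [Finset.mem_filter]
            exact ⟨(mem_Wts G w).mpr ⟨P, hP, rfl⟩, hlt⟩
          have := hcon hPin
          simp only [Finset.mem_filter] at this
          omega
      have := Finset.card_lt_card hsub
      unfold rnk at hgeP hr
      omega


lemma main_ind {X : Set V} (hX : ∀ u v, G.Adj u v → (u ∈ X ↔ v ∉ X)) :
    ∀ k (F₀ M : Finset (Sym2 V)), IsPM G M → F₀ ⊆ M → rnkF G w F₀ M ≤ k →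
      ∃ F, F₀ ⊆ F ∧ F ⊆ M ∧ F.card ≤ F₀.card + k ∧
        ∀ P, IsPM G P → F ⊆ P → wt w M ≤ wt w P := by
  intro k
  induction k with
  | zero =>
    intro F₀ M hM hFM hr
    refine ⟨F₀, subset_refl _, hFM, by omega, ?_⟩
    intro P hP hFP
    by_contra hlt
    push_neg at hlt
    have hmem : wt w P ∈ (WtsF G w F₀).filter (· < wt w M) := by
      rw [Finset.mem_filter]
      exact ⟨(mem_WtsF G w).mpr ⟨P, hP, hFP, rfl⟩, hlt⟩
    have := Finset.card_pos.mpr ⟨wt w P, hmem⟩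
    unfold rnkF at hr
    omega
  | succ k IH =>
    intro F₀ M hM hFM hr
    by_cases hex : ∃ P, IsPM G P ∧ F₀ ⊆ P ∧ wt w P < wt w M
    · have hne : (WtsF G w F₀).Nonempty := ⟨wt w M, (mem_WtsF G w).mpr ⟨M, hM, hFM, rfl⟩⟩
      obtain ⟨N₀, hN, hFN, hwN⟩ := (mem_WtsF G w).mp (Finset.min'_mem _ hne)
      have hmin : ∀ P, IsPM G P → F₀ ⊆ P → wt w N₀ ≤ wt w P := by
        intro P hP hFP
        rw [hwN]
        exact Finset.min'_le _ _ ((mem_WtsF G w).mpr ⟨P, hP, hFP, rfl⟩)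
      obtain ⟨P₁, hP₁, hFP₁, hlt₁⟩ := hex
      have hltM : wt w N₀ < wt w M := lt_of_le_of_lt (hmin P₁ hP₁ hFP₁) hlt₁
      obtain ⟨e, heM, heF, hkey⟩ := key hX hM hN hFM hFN hmin hltM
      set F₁ := insert e F₀ with hF₁
      have hF₁M : F₁ ⊆ M := Finset.insert_subset heM hFM
      have hr₁ : rnkF G w F₁ M ≤ k := by
        have hsub : (WtsF G w F₁).filter (· < wt w M) ⊆
            ((WtsF G w F₀).filter (· < wt w M)).erase (wt w N₀) := by
          intro u hu
          rw [Finset.mem_filter] at hu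
          obtain ⟨P, hP, hFP, hwP⟩ := (mem_WtsF G w).mp hu.1
          rw [Finset.mem_erase, Finset.mem_filter]
          have heP : e ∈ P := hFP (Finset.mem_insert_self e F₀)
          have hF₀P : F₀ ⊆ P := fun a ha => hFP (Finset.mem_insert_of_mem ha)
          refine ⟨?_, (mem_WtsF G w).mpr ⟨P, hP, hF₀P, hwP⟩, hu.2⟩
          have := hkey P hP hF₀P heP
          omega
        have hNin : wt w N₀ ∈ (WtsF G w F₀).filter (· < wt w M) := by
          rw [Finset.mem_filter]
          exact ⟨(mem_WtsF G w).mpr ⟨N₀, hN, hFN, rfl⟩, hltM⟩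
        have h1 := Finset.card_le_card hsub
        rw [Finset.card_erase_of_mem hNin] at h1
        unfold rnkF at hr ⊢
        have h2 := Finset.card_pos.mpr ⟨wt w N₀, hNin⟩
        omega
      obtain ⟨F, hF₁F, hFM', hcard, hminF⟩ := IH F₁ M hM hF₁M hr₁
      refine ⟨F, ?_, hFM', ?_, hminF⟩
      · exact fun a ha => hF₁F (Finset.mem_insert_of_mem ha)
      · have h3 := Finset.card_insert_le e F₀
        rw [← hF₁] at h3
        omega
    · push_neg at hex
      refine ⟨F₀, subset_refl _, hFM, by omega, ?_⟩
      intro P hP hFP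
      exact hex P hP hFP

end Main

end PMAux

/-- **Theorem (ℓ-th smallest perfect matching in bipartite graphs).**
If `M` is an `ℓ`-th smallest perfect matching of a finite weighted *bipartite* graph `G`
(`ℓ ≥ 1`), then there is a set `F ⊆ E` of at most `ℓ - 1` edges such that `w(M)` is the
minimum of `w(M')` over all perfect matchings `M'` of `G` containing `F`. -/
theorem lth_smallest_pm_bipartite (G : SimpleGraph V) (w : Sym2 V → ℤ)
    (hbip : ∃ X : Set V, ∀ u v : V, G.Adj u v → (u ∈ X ↔ v ∉ X))
    (ℓ : ℕ) (hℓ : 1 ≤ ℓ) (M : Finset (Sym2 V)) (hM : NthSmallest G w ℓ M) :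
    ∃ F : Finset (Sym2 V), (∀ e ∈ F, e ∈ G.edgeSet) ∧ F.card ≤ ℓ - 1 ∧
      IsLeast {k : ℤ | ∃ M' : Finset (Sym2 V), IsPM G M' ∧ F ⊆ M' ∧ wt w M' = k} (wt w M) := by
  obtain ⟨X, hX⟩ := hbip
  obtain ⟨hPM, hrnk⟩ := (PMAux.char G w ℓ hℓ M).mp hM
  have hreq : PMAux.rnkF G w ∅ M = PMAux.rnk G w M := rfl
  obtain ⟨F, _, hFM, hcard, hminF⟩ :=
    PMAux.main_ind G w hX (ℓ - 1) ∅ M hPM (Finset.empty_subset M) (by omega)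
  refine ⟨F, fun e he => hPM.1 e (hFM he), by simpa using hcard, ⟨M, hPM, hFM, rfl⟩, ?_⟩
  rintro k ⟨P, hP, hFP, rfl⟩
  exact hminF P hP hFP
end

section
/- Let G = (V, E) be a finite simple undirected graph with edge weights w : E → ℤ that has at least one perfect matching, and let z be an optimal dual solution with residual graph G_z = (V, E_z). Then a perfect matching M of G has minimum weight among all perfect matchings of G if and only if M ⊆ E_z and |M ∩ δ(A)| = 1 holds for every odd-cardinality set A ⊆ V with z_A > 0. -/
variable {V : Type} [Fintype V] [DecidableEq V]

/-- `InCut A e` : the edge `e` has exactly one endpoint in `A`, i.e. `e ∈ δ(A)`. -/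
def InCut (A : Finset V) (e : Sym2 V) : Prop :=
  ∃ u v : V, e = s(u, v) ∧ u ∈ A ∧ v ∉ A

instance (A : Finset V) (e : Sym2 V) : Decidable (InCut A e) :=
  inferInstanceAs (Decidable (∃ u v : V, e = s(u, v) ∧ u ∈ A ∧ v ∉ A))

lemma inCut_sym2 {A : Finset V} {u v : V} :
    InCut A s(u, v) ↔ (u ∈ A ∧ v ∉ A) ∨ (v ∈ A ∧ u ∉ A) := by
  constructor
  · rintro ⟨a, b, he, ha, hb⟩
    rw [Sym2.eq_iff] at he
    rcases he with ⟨rfl, rfl⟩ | ⟨rfl, rfl⟩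
    · exact Or.inl ⟨ha, hb⟩
    · exact Or.inr ⟨ha, hb⟩
  · rintro (⟨h1, h2⟩ | ⟨h1, h2⟩)
    · exact ⟨u, v, rfl, h1, h2⟩
    · exact ⟨v, u, Sym2.eq_swap.symm, h1, h2⟩

/-- Exactly one matching edge crosses each singleton cut. -/
lemma cut_card_singleton {G : SimpleGraph V} {M : Finset (Sym2 V)} (hM : IsPM G M) (v : V) :
    (M.filter (fun e => InCut {v} e)).card = 1 := by
  obtain ⟨hE, hcov⟩ := hM
  obtain ⟨e, ⟨heM, hve⟩, huniq⟩ := hcov v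
  have hfe : M.filter (fun e => InCut {v} e) = {e} := by
    ext e'
    simp only [Finset.mem_filter, Finset.mem_singleton]
    constructor
    · rintro ⟨he'M, a, b, rfl, ha, hb⟩
      simp only [Finset.mem_singleton] at ha
      subst ha
      exact huniq _ ⟨he'M, Sym2.mem_mk_left _ _⟩
    · rintro rfl
      refine ⟨heM, ?_⟩
      obtain ⟨u, rfl⟩ := Sym2.mem_iff_exists.mp hve
      have hne : v ≠ u := by
        have := G.not_isDiag_of_mem_edgeSet (hE _ heM)
        simp [Sym2.isDiag_iff_proj_eq] at this
        exact this
      exact ⟨v, u, rfl, Finset.mem_singleton_self v, by simp [hne.symm]⟩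
  rw [hfe, Finset.card_singleton]

/-- Double counting: the size of `A` equals the sum over matching edges of the number of
endpoints in `A`. -/
lemma card_eq_sum_endpoints {G : SimpleGraph V} {M : Finset (Sym2 V)} (hM : IsPM G M)
    (A : Finset V) :
    A.card = ∑ e ∈ M, (A.filter (fun x => x ∈ e)).card := by
  obtain ⟨hE, hcov⟩ := hM
  have : ∀ x : V, (M.filter (fun e => x ∈ e)).card = 1 := by
    intro x
    obtain ⟨e, ⟨heM, hxe⟩, huniq⟩ := hcov x
    have : M.filter (fun e => x ∈ e) = {e} := by
      ext e'
      simp only [Finset.mem_filter, Finset.mem_singleton]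
      exact ⟨fun h => huniq _ h, fun h => h ▸ ⟨heM, hxe⟩⟩
    rw [this, Finset.card_singleton]
  calc A.card = ∑ x ∈ A, 1 := by rw [Finset.sum_const, smul_eq_mul, mul_one]
    _ = ∑ x ∈ A, (M.filter (fun e => x ∈ e)).card := by
        exact Finset.sum_congr rfl fun x _ => (this x).symm
    _ = ∑ x ∈ A, ∑ e ∈ M, if x ∈ e then 1 else 0 := by
        exact Finset.sum_congr rfl fun x _ => Finset.card_filter _ _
    _ = ∑ e ∈ M, ∑ x ∈ A, if x ∈ e then 1 else 0 := Finset.sum_comm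
    _ = ∑ e ∈ M, (A.filter (fun x => x ∈ e)).card := by
        exact Finset.sum_congr rfl fun e _ => (Finset.card_filter _ _).symm

lemma endpoints_card {A : Finset V} {u v : V} (huv : u ≠ v) :
    (A.filter (fun x => x ∈ s(u, v))).card
      = (if u ∈ A then 1 else 0) + (if v ∈ A then 1 else 0) := by
  have : A.filter (fun x => x ∈ s(u, v)) = ({u, v} : Finset V).filter (fun x => x ∈ A) := by
    ext x
    simp only [Finset.mem_filter, Sym2.mem_iff, Finset.mem_insert, Finset.mem_singleton]
    tauto
  rw [this, Finset.card_filter, Finset.sum_pair huv]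

/-- At least one matching edge crosses each odd cut. -/
lemma cut_card_pos {G : SimpleGraph V} {M : Finset (Sym2 V)} (hM : IsPM G M)
    {A : Finset V} (hA : Odd A.card) :
    1 ≤ (M.filter (fun e => InCut A e)).card := by
  by_contra h
  push_neg at h
  interval_cases h' : (M.filter (fun e => InCut A e)).card
  rw [Finset.card_eq_zero, Finset.filter_eq_empty_iff] at h'
  have heven : Even A.card := by
    rw [card_eq_sum_endpoints hM A]
    apply Finset.even_sum
    intro e heM
    obtain ⟨u, v, rfl⟩ : ∃ u v : V, e = s(u, v) := by
      induction e using Sym2.ind with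
      | _ u v => exact ⟨u, v, rfl⟩
    have hne : u ≠ v := by
      have := G.not_isDiag_of_mem_edgeSet (hM.1 _ heM)
      simpa [Sym2.isDiag_iff_proj_eq] using this
    have hnc := h' heM
    rw [inCut_sym2] at hnc
    push_neg at hnc
    rw [endpoints_card hne]
    by_cases hu : u ∈ A <;> by_cases hv : v ∈ A <;> simp [hu, hv] at hnc ⊢ <;> tauto
  exact (Nat.not_even_iff_odd.mpr hA) heven

/-- Exchanging the order of summation: summing the dual constraints over the matching edges
gives the dual values weighted by cut sizes. -/
lemma swap_sum (z : Finset V → ℝ) (M : Finset (Sym2 V)) :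
    ∑ e ∈ M, ∑ A ∈ Finset.univ.filter (fun A : Finset V => Odd A.card ∧ InCut A e), z A
      = ∑ A ∈ Finset.univ.filter (fun A : Finset V => Odd A.card),
          z A * ((M.filter (fun e => InCut A e)).card : ℝ) := by
  have h1 : ∀ e : Sym2 V,
      ∑ A ∈ Finset.univ.filter (fun A : Finset V => Odd A.card ∧ InCut A e), z A
        = ∑ A ∈ Finset.univ.filter (fun A : Finset V => Odd A.card),
            if InCut A e then z A else 0 := by
    intro e
    rw [← Finset.filter_filter, Finset.sum_filter]
  calc ∑ e ∈ M, ∑ A ∈ Finset.univ.filter (fun A : Finset V => Odd A.card ∧ InCut A e), z A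
      = ∑ e ∈ M, ∑ A ∈ Finset.univ.filter (fun A : Finset V => Odd A.card),
          if InCut A e then z A else 0 := Finset.sum_congr rfl fun e _ => h1 e
    _ = ∑ A ∈ Finset.univ.filter (fun A : Finset V => Odd A.card),
          ∑ e ∈ M, if InCut A e then z A else 0 := Finset.sum_comm
    _ = ∑ A ∈ Finset.univ.filter (fun A : Finset V => Odd A.card),
          z A * ((M.filter (fun e => InCut A e)).card : ℝ) := by
        refine Finset.sum_congr rfl fun A _ => ?_
        rw [← Finset.sum_filter, Finset.sum_const, nsmul_eq_mul, mul_comm]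

/-- **Lemma (characterization of minimum-weight perfect matchings via an optimal dual
solution and its residual graph).**
Let `z` be a feasible dual solution (`hfeas1`, `hfeas2`) whose value `∑_{A odd} z_A` equals
the minimum weight `μ` of a perfect matching of `G` (`hmin`, `hopt`), i.e. `z` is optimal.
Then a perfect matching `M` of `G` has minimum weight if and only if every edge of `M` lies
in the residual graph `G_z` (i.e. `w(e) = ∑_{A odd, e ∈ δ(A)} z_A`) and `|M ∩ δ(A)| = 1`
for every odd set `A` with `z_A > 0`. -/
theorem min_weight_pm_iff_residual (G : SimpleGraph V) (w : Sym2 V → ℤ)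
    (z : Finset V → ℝ)
    (hfeas1 : ∀ e ∈ G.edgeSet,
      ∑ A ∈ Finset.univ.filter (fun A : Finset V => Odd A.card ∧ InCut A e), z A ≤ (w e : ℝ))
    (hfeas2 : ∀ A : Finset V, Odd A.card → 1 < A.card → 0 ≤ z A)
    (μ : ℤ)
    (hmin : IsLeast {k : ℤ | ∃ M : Finset (Sym2 V), IsPM G M ∧ wt w M = k} μ)
    (hopt : ∑ A ∈ Finset.univ.filter (fun A : Finset V => Odd A.card), z A = (μ : ℝ))
    (M : Finset (Sym2 V)) (hM : IsPM G M) :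
    (∀ M' : Finset (Sym2 V), IsPM G M' → wt w M ≤ wt w M') ↔
      ((∀ e ∈ M,
          (w e : ℝ) = ∑ A ∈ Finset.univ.filter (fun A : Finset V => Odd A.card ∧ InCut A e), z A) ∧
        ∀ A : Finset V, Odd A.card → 0 < z A → (M.filter (fun e => InCut A e)).card = 1) := by
  -- termwise lower bound on the dual side, valid for any perfect matching
  have hterm : ∀ M' : Finset (Sym2 V), IsPM G M' →
      ∀ A ∈ Finset.univ.filter (fun A : Finset V => Odd A.card),
      z A ≤ z A * ((M'.filter (fun e => InCut A e)).card : ℝ) := by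
    intro M' hM' A hA
    rw [Finset.mem_filter] at hA
    have hA : Odd A.card := hA.2
    have hA0 : A.card ≠ 0 := by
      intro h0; rw [h0] at hA; exact (Nat.not_odd_iff_even.mpr Even.zero) hA
    have hge : 1 ≤ A.card := Nat.one_le_iff_ne_zero.mpr hA0
    rcases eq_or_lt_of_le hge with h1 | h1
    · -- |A| = 1 : singleton, cut size is exactly 1
      obtain ⟨v, rfl⟩ := Finset.card_eq_one.mp h1.symm
      rw [cut_card_singleton hM' v]
      norm_num
    · -- |A| > 1 : z A ≥ 0 and the cut size is at least 1
      have hz := hfeas2 A hA h1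
      have hc : (1 : ℝ) ≤ ((M'.filter (fun e => InCut A e)).card : ℝ) := by
        exact_mod_cast cut_card_pos hM' hA
      calc z A = z A * 1 := (mul_one _).symm
        _ ≤ z A * ((M'.filter (fun e => InCut A e)).card : ℝ) :=
            mul_le_mul_of_nonneg_left hc hz
  -- termwise upper bound from dual feasibility
  have htight : ∀ M' : Finset (Sym2 V), IsPM G M' → ∀ e ∈ M',
      ∑ A ∈ Finset.univ.filter (fun A : Finset V => Odd A.card ∧ InCut A e), z A ≤ (w e : ℝ) :=
    fun M' hM' e he => hfeas1 e (hM'.1 e he)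
  have hwt : ∀ M' : Finset (Sym2 V), (∑ e ∈ M', (w e : ℝ)) = (wt w M' : ℝ) := by
    intro M'; rw [wt]; push_cast; ring
  -- the full chain of inequalities
  have hchain : ∀ M' : Finset (Sym2 V), IsPM G M' → (μ : ℝ) ≤ (wt w M' : ℝ) := by
    intro M' hM'
    calc (μ : ℝ) = ∑ A ∈ Finset.univ.filter (fun A : Finset V => Odd A.card), z A := hopt.symm
      _ ≤ ∑ A ∈ Finset.univ.filter (fun A : Finset V => Odd A.card),
            z A * ((M'.filter (fun e => InCut A e)).card : ℝ) :=
          Finset.sum_le_sum (hterm M' hM')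
      _ = ∑ e ∈ M', ∑ A ∈ Finset.univ.filter (fun A : Finset V => Odd A.card ∧ InCut A e), z A :=
          (swap_sum z M').symm
      _ ≤ ∑ e ∈ M', (w e : ℝ) := Finset.sum_le_sum (htight M' hM')
      _ = (wt w M' : ℝ) := hwt M'
  constructor
  · -- forward direction
    intro hminM
    obtain ⟨⟨M0, hM0, hM0w⟩, hlb⟩ := hmin
    have hwM : wt w M = μ :=
      le_antisymm (hM0w ▸ hminM M0 hM0) (hlb ⟨M, hM, rfl⟩)
    have hwMR : (wt w M : ℝ) = (μ : ℝ) := by exact_mod_cast hwM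
    have e1 : ∑ A ∈ Finset.univ.filter (fun A : Finset V => Odd A.card), z A
        ≤ ∑ A ∈ Finset.univ.filter (fun A : Finset V => Odd A.card),
            z A * ((M.filter (fun e => InCut A e)).card : ℝ) :=
      Finset.sum_le_sum (hterm M hM)
    have e2 : ∑ e ∈ M, ∑ A ∈ Finset.univ.filter (fun A : Finset V => Odd A.card ∧ InCut A e), z A
        ≤ ∑ e ∈ M, (w e : ℝ) := Finset.sum_le_sum (htight M hM)
    -- the chain collapses to equalities
    have heq1 : ∑ A ∈ Finset.univ.filter (fun A : Finset V => Odd A.card), z A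
        = ∑ A ∈ Finset.univ.filter (fun A : Finset V => Odd A.card),
            z A * ((M.filter (fun e => InCut A e)).card : ℝ) := by
      apply le_antisymm e1
      calc ∑ A ∈ Finset.univ.filter (fun A : Finset V => Odd A.card),
            z A * ((M.filter (fun e => InCut A e)).card : ℝ)
          = ∑ e ∈ M, ∑ A ∈ Finset.univ.filter
              (fun A : Finset V => Odd A.card ∧ InCut A e), z A := (swap_sum z M).symm
        _ ≤ ∑ e ∈ M, (w e : ℝ) := e2
        _ = (μ : ℝ) := by rw [hwt M, hwMR]
        _ = ∑ A ∈ Finset.univ.filter (fun A : Finset V => Odd A.card), z A := hopt.symm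
    have heq2 : ∑ e ∈ M, ∑ A ∈ Finset.univ.filter
          (fun A : Finset V => Odd A.card ∧ InCut A e), z A
        = ∑ e ∈ M, (w e : ℝ) := by
      apply le_antisymm e2
      calc ∑ e ∈ M, (w e : ℝ) = (μ : ℝ) := by rw [hwt M, hwMR]
        _ = ∑ A ∈ Finset.univ.filter (fun A : Finset V => Odd A.card), z A := hopt.symm
        _ ≤ ∑ A ∈ Finset.univ.filter (fun A : Finset V => Odd A.card),
              z A * ((M.filter (fun e => InCut A e)).card : ℝ) := e1
        _ = ∑ e ∈ M, ∑ A ∈ Finset.univ.filter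
              (fun A : Finset V => Odd A.card ∧ InCut A e), z A := (swap_sum z M).symm
    constructor
    · intro e he
      exact ((Finset.sum_eq_sum_iff_of_le (htight M hM)).mp heq2 e he).symm
    · intro A hA hzA
      have hAΩ : A ∈ Finset.univ.filter (fun A : Finset V => Odd A.card) := by
        simp [hA]
      have hzc : z A = z A * ((M.filter (fun e => InCut A e)).card : ℝ) :=
        (Finset.sum_eq_sum_iff_of_le (hterm M hM)).mp heq1 A hAΩ
      have hzc' : z A * 1 = z A * ((M.filter (fun e => InCut A e)).card : ℝ) := by
        rw [mul_one]; exact hzc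
      have hc : (1 : ℝ) = ((M.filter (fun e => InCut A e)).card : ℝ) :=
        mul_left_cancel₀ (ne_of_gt hzA) hzc'
      exact_mod_cast hc.symm
  · -- backward direction
    rintro ⟨h1, h2⟩ M' hM'
    have hwM : (wt w M : ℝ) = (μ : ℝ) := by
      have hb : (wt w M : ℝ) = ∑ e ∈ M,
          ∑ A ∈ Finset.univ.filter (fun A : Finset V => Odd A.card ∧ InCut A e), z A := by
        rw [← hwt M]
        exact Finset.sum_congr rfl fun e he => h1 e he
      rw [hb, swap_sum z M, ← hopt]
      refine Finset.sum_congr rfl fun A hA => ?_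
      rw [Finset.mem_filter] at hA
      have hA : Odd A.card := hA.2
      rcases lt_trichotomy (z A) 0 with hz | hz | hz
      · -- z A < 0 : A must be a singleton, where the cut size is 1
        have hA1 : A.card = 1 := by
          by_contra hne
          have hA0 : A.card ≠ 0 := by
            intro h0; rw [h0] at hA; exact (Nat.not_odd_iff_even.mpr Even.zero) hA
          have : 1 < A.card := lt_of_le_of_ne (Nat.one_le_iff_ne_zero.mpr hA0) (Ne.symm hne)
          exact absurd (hfeas2 A hA this) (not_le.mpr hz)
        obtain ⟨v, rfl⟩ := Finset.card_eq_one.mp hA1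
        rw [cut_card_singleton hM v]; norm_num
      · rw [hz, zero_mul]
      · rw [h2 A hA hz]; norm_num
    have hfin : wt w M = μ := by exact_mod_cast hwM
    rw [hfin]
    exact hmin.2 ⟨M', hM', rfl⟩
end

section
/- Let G = (V, E) be a finite simple undirected graph with non-negative edge weights w : E → ℕ that admits a minimum-weight perfect matching M, let r ≥ w(M) be an integer, and define new edge weights w' : E → ℤ by w'(e) = −w(e) − r − 1 for e ∈ M and w'(e) = w(e) + r + 1 for e ∉ M. Then every cycle C in G with w'(C) ≤ r − w(M) is M-alternating. -/
variable {V : Type} [Fintype V] [DecidableEq V]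

/-- The total weight of (the edge set of) a closed walk. -/
def cycWt {G : SimpleGraph V} (w : Sym2 V → ℤ) {v : V} (c : G.Walk v v) : ℤ :=
  (c.edges.map w).sum

/-- A cycle `c` is `M`-alternating: its edges alternate (cyclically) between edges in `M`
and edges not in `M`; equivalently, every vertex of the cycle lies in exactly one edge of
the cycle that belongs to `M`. -/
def IsAltCycle (G : SimpleGraph V) (M : Finset (Sym2 V)) {v : V} (c : G.Walk v v) : Prop :=
  c.IsCycle ∧ ∀ u ∈ c.support, ∃! e, e ∈ c.edges ∧ u ∈ e ∧ e ∈ M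

/-!
Let `k` and `m` be the numbers of edges of the cycle `C` inside and outside `M`. Each of the
`k` matching edges of `C` has both endpoints among the `|C| = k + m` vertices of `C`, and each
vertex meets at most one of them, so `2k ≤ k + m`. On the other hand
`w'(C) ≥ -w(M) + (m - k)(r + 1)`, which exceeds `r - w(M)` as soon as `m > k` (here `r ≥ 0`).
Hence `m = k`, the double count is tight, and every vertex of `C` meets exactly one matching
edge of `C`.
-/

open Finset

section DoubleCounting

variable {α : Type*} [DecidableEq α]

theorem sum_card_filter_mem_eq_two_mul_card {T : Finset α} {F : Finset (Sym2 α)}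
    (hdiag : ∀ e ∈ F, ¬e.IsDiag) (hT : ∀ e ∈ F, ∀ u ∈ e, u ∈ T) :
    ∑ u ∈ T, #{e ∈ F | u ∈ e} = 2 * #F := by
  have hswap := sum_card_bipartiteAbove_eq_sum_card_bipartiteBelow (s := T) (t := F)
    (r := fun u e => u ∈ e)
  simp only [bipartiteAbove, bipartiteBelow] at hswap
  rw [hswap, sum_const_nat fun e he => ?_, mul_comm]
  have hends : {u ∈ T | u ∈ e} = e.toFinset := by
    ext u
    simpa [Sym2.mem_toFinset] using hT e he u
  rw [hends, Sym2.card_toFinset_of_not_isDiag e (hdiag e he)]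

end DoubleCounting

namespace SimpleGraph.Walk

variable {α : Type*} [DecidableEq α] {G : SimpleGraph α} {v : α} {c : G.Walk v v}

theorem IsCycle.card_support_toFinset (hc : c.IsCycle) : #c.support.toFinset = c.length := by
  have hv : v ∈ c.support.tail.toFinset := List.mem_toFinset.mpr (c.end_mem_tail_support hc.not_nil)
  rw [← c.cons_tail_support, List.toFinset_cons, insert_eq_of_mem hv,
    List.toFinset_card_of_nodup hc.support_nodup, List.length_tail, length_support,
    Nat.add_sub_cancel]

theorem IsCycle.card_edges_toFinset (hc : c.IsCycle) : #c.edges.toFinset = c.length := by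
  rw [List.toFinset_card_of_nodup hc.edges_nodup, length_edges]

theorem sum_card_filter_mem_edges_inter_eq (c : G.Walk v v) (M : Finset (Sym2 α)) :
    ∑ u ∈ c.support.toFinset, #{e ∈ c.edges.toFinset ∩ M | u ∈ e} =
      2 * #(c.edges.toFinset ∩ M) := by
  refine sum_card_filter_mem_eq_two_mul_card (fun e he => ?_) (fun e he u hu => ?_) <;>
    have he : e ∈ c.edges := List.mem_toFinset.mp (mem_inter.mp he).1
  · exact G.not_isDiag_of_mem_edgeSet (c.edges_subset_edgeSet he)
  · exact List.mem_toFinset.mpr (c.mem_support_of_mem_edges he hu)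

theorem card_filter_mem_edges_inter_le_one {M : Finset (Sym2 α)}
    (hM : ∀ u, #{e ∈ M | u ∈ e} ≤ 1) (u : α) : #{e ∈ c.edges.toFinset ∩ M | u ∈ e} ≤ 1 :=
  (card_le_card (filter_subset_filter _ inter_subset_right)).trans (hM u)

theorem IsCycle.two_mul_card_edges_inter_le_length (hc : c.IsCycle) {M : Finset (Sym2 α)}
    (hM : ∀ u, #{e ∈ M | u ∈ e} ≤ 1) : 2 * #(c.edges.toFinset ∩ M) ≤ c.length := by
  rw [← sum_card_filter_mem_edges_inter_eq, ← hc.card_support_toFinset, card_eq_sum_ones]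
  exact sum_le_sum fun u _ => card_filter_mem_edges_inter_le_one hM u

end SimpleGraph.Walk

section

omit [Fintype V]

theorem IsPM.card_filter_mem_le_one {G : SimpleGraph V} {M : Finset (Sym2 V)} (hM : IsPM G M)
    (u : V) : #{e ∈ M | u ∈ e} ≤ 1 :=
  card_le_one.mpr fun _ ha _ hb => (hM.2 u).unique (mem_filter.mp ha) (mem_filter.mp hb)

theorem SimpleGraph.Walk.IsCycle.isAltCycle_of_two_mul_card_edges_inter_eq {G : SimpleGraph V}
    {v : V} {c : G.Walk v v} (hc : c.IsCycle) {M : Finset (Sym2 V)}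
    (hM : ∀ u, #{e ∈ M | u ∈ e} ≤ 1) (h : 2 * #(c.edges.toFinset ∩ M) = c.length) :
    IsAltCycle G M c := by
  have hone : ∀ u ∈ c.support.toFinset, #{e ∈ c.edges.toFinset ∩ M | u ∈ e} = 1 := by
    rw [← sum_eq_sum_iff_of_le fun u _ => card_filter_mem_edges_inter_le_one hM u,
      sum_card_filter_mem_edges_inter_eq, h, ← hc.card_support_toFinset, card_eq_sum_ones]
  refine ⟨hc, fun u hu => ?_⟩
  simpa [card_eq_one_iff_existsUnique, and_comm, and_assoc] using
    hone u (List.mem_toFinset.mpr hu)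

theorem cycWt_eq_sum_edges_toFinset {G : SimpleGraph V} (w : Sym2 V → ℤ) {v : V}
    {c : G.Walk v v} (hc : c.edges.Nodup) : cycWt w c = ∑ e ∈ c.edges.toFinset, w e := by
  rw [cycWt, List.sum_toFinset _ hc]

theorem neg_wt_add_mul_le_sum_of_reweight (w : Sym2 V → ℕ) (M S : Finset (Sym2 V)) (r : ℤ) (w' : Sym2 V → ℤ)
    (hw' : ∀ e, w' e = if e ∈ M then -(w e : ℤ) - r - 1 else (w e : ℤ) + r + 1) :
    -wt (fun e => (w e : ℤ)) M + ((#(S \ M) : ℤ) - #(S ∩ M)) * (r + 1) ≤ ∑ e ∈ S, w' e := by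
  have hin : ∑ e ∈ S ∩ M, w' e = -∑ e ∈ S ∩ M, (w e : ℤ) - #(S ∩ M) * (r + 1) := by
    rw [← nsmul_eq_mul, ← sum_const, ← sum_neg_distrib, ← sum_sub_distrib]
    exact sum_congr rfl fun e he => by rw [hw', if_pos (mem_inter.mp he).2]; ring
  have hout : #(S \ M) • (r + 1) ≤ ∑ e ∈ S \ M, w' e :=
    card_nsmul_le_sum _ _ _ fun e he => by
      rw [hw', if_neg (mem_sdiff.mp he).2]; linarith [Int.natCast_nonneg (w e)]
  have hsub : ∑ e ∈ S ∩ M, (w e : ℤ) ≤ wt (fun e => (w e : ℤ)) M :=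
    sum_le_sum_of_subset_of_nonneg inter_subset_right fun e _ _ => Int.natCast_nonneg (w e)
  rw [nsmul_eq_mul] at hout
  rw [← sum_inter_add_sum_sdiff S M w', hin]
  linarith

end

theorem light_cycles_are_alternating_general (G : SimpleGraph V) (w : Sym2 V → ℕ)
    (M : Finset (Sym2 V)) (hM : IsPM G M)
    (r : ℤ) (hr : wt (fun e => (w e : ℤ)) M ≤ r)
    (w' : Sym2 V → ℤ)
    (hw' : ∀ e : Sym2 V,
      w' e = if e ∈ M then -(w e : ℤ) - r - 1 else (w e : ℤ) + r + 1)
    {v : V} (c : G.Walk v v) (hc : c.IsCycle)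
    (hlight : cycWt w' c ≤ r - wt (fun e => (w e : ℤ)) M) :
    IsAltCycle G M c := by
  set S := c.edges.toFinset
  have hlen : #(S ∩ M) + #(S \ M) = c.length := by
    rw [card_inter_add_card_sdiff, hc.card_edges_toFinset]
  have hk : 2 * #(S ∩ M) ≤ c.length :=
    hc.two_mul_card_edges_inter_le_length hM.card_filter_mem_le_one
  have hr0 : 0 ≤ r := (sum_nonneg fun e _ => Int.natCast_nonneg (w e)).trans hr
  have hm : #(S \ M) ≤ #(S ∩ M) := by
    have hS := (neg_wt_add_mul_le_sum_of_reweight w M S r w' hw').trans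
      ((cycWt_eq_sum_edges_toFinset w' hc.edges_nodup).symm.trans_le hlight)
    by_contra! hlt
    have : (1 : ℤ) ≤ #(S \ M) - #(S ∩ M) := by omega
    nlinarith
  exact hc.isAltCycle_of_two_mul_card_edges_inter_eq hM.card_filter_mem_le_one
    (by omega : 2 * #(S ∩ M) = c.length)

/-- **Lemma (light cycles are alternating).** Let `M` be a minimum-weight perfect matching
of `G` with non-negative weights `w : E → ℕ`, let `r ≥ w(M)` be an integer, and define
`w'(e) = -w(e) - r - 1` for `e ∈ M` and `w'(e) = w(e) + r + 1` for `e ∉ M`. Then every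
cycle `C` of `G` with `w'(C) ≤ r - w(M)` is `M`-alternating. -/
theorem light_cycles_are_alternating (G : SimpleGraph V) (w : Sym2 V → ℕ)
    (M : Finset (Sym2 V)) (hM : IsPM G M)
    (hmin : ∀ M' : Finset (Sym2 V), IsPM G M' →
      wt (fun e => (w e : ℤ)) M ≤ wt (fun e => (w e : ℤ)) M')
    (r : ℤ) (hr : wt (fun e => (w e : ℤ)) M ≤ r)
    (w' : Sym2 V → ℤ)
    (hw' : ∀ e : Sym2 V,
      w' e = if e ∈ M then -(w e : ℤ) - r - 1 else (w e : ℤ) + r + 1)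
    {v : V} (c : G.Walk v v) (hc : c.IsCycle)
    (hlight : cycWt w' c ≤ r - wt (fun e => (w e : ℤ)) M) :
    IsAltCycle G M c :=
  light_cycles_are_alternating_general G w M hM r hr w' hw' c hc hlight
end

section
/- Let G = (V, E) be a finite simple undirected graph with non-negative edge weights w : E → ℕ that admits a minimum-weight perfect matching M, let r ≥ w(M) be an integer, and define new edge weights w' : E → ℤ by w'(e) = −w(e) − r − 1 for e ∈ M and w'(e) = w(e) + r + 1 for e ∉ M. Then w' is conservative, i.e. every cycle of G has non-negative total w'-weight. -/
/-!
Let `A` be the edge set of a cycle `C` and `k = |A ∩ M|`. Every vertex of `C` lies on two edges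
of `A` and on at most one edge of `M`, so `2k ≤ |A|`, and
`w'(C) = w(A \ M) - w(A ∩ M) + (r + 1)(|A| - 2k)`. If `2k < |A|`, the last term exceeds
`r ≥ w(M) ≥ w(A ∩ M)`. If `2k = |A|`, every vertex of `C` lies on exactly one edge of `A ∩ M`,
so `A ∆ M` is again a perfect matching; its weight `w(M) + w(A \ M) - w(A ∩ M)` is at least
`w(M)` by minimality.
-/

variable {V : Type} [Fintype V] [DecidableEq V]

open Finset
open scoped symmDiff

theorem Finset.sum_symmDiff_add_two_nsmul_sum_inter {ι M : Type*} [DecidableEq ι]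
    [AddCommMonoid M] (s t : Finset ι) (f : ι → M) :
    ∑ x ∈ s ∆ t, f x + 2 • ∑ x ∈ s ∩ t, f x = ∑ x ∈ s, f x + ∑ x ∈ t, f x := by
  rw [← sum_union_inter, ← sum_sdiff (inter_subset_union : s ∩ t ⊆ s ∪ t),
    symmDiff_eq_sup_sdiff_inf, two_nsmul, add_assoc]
  rfl

theorem Finset.card_symmDiff_add_two_mul_card_inter {ι : Type*} [DecidableEq ι]
    (s t : Finset ι) : #(s ∆ t) + 2 * #(s ∩ t) = #s + #t := by
  simpa using sum_symmDiff_add_two_nsmul_sum_inter s t fun _ => (1 : ℕ)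

theorem Finset.sum_ite_mem_neg_sub_add {ι : Type*} [DecidableEq ι] (s t : Finset ι)
    (f : ι → ℤ) (c : ℤ) :
    ∑ x ∈ s, (if x ∈ t then -f x - c else f x + c) =
      ∑ x ∈ s \ t, f x - ∑ x ∈ s ∩ t, f x + c * (#s - 2 * #(s ∩ t)) := by
  have hcard : (#(s \ t) : ℤ) + #(s ∩ t) = #s := mod_cast card_sdiff_add_card_inter s t
  rw [sum_ite, filter_mem_eq_inter, filter_notMem_eq_sdiff, sum_sub_distrib, sum_add_distrib,
    sum_neg_distrib, sum_const, sum_const, nsmul_eq_mul, nsmul_eq_mul, ← hcard]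
  ring

section

variable {α : Type*} [DecidableEq α]

def edgesAt (X : Finset (Sym2 α)) (u : α) : Finset (Sym2 α) := {e ∈ X | u ∈ e}

@[simp]
theorem mem_edgesAt {X : Finset (Sym2 α)} {u : α} {e : Sym2 α} :
    e ∈ edgesAt X u ↔ e ∈ X ∧ u ∈ e :=
  mem_filter

theorem edgesAt_mono {X Y : Finset (Sym2 α)} (h : X ⊆ Y) (u : α) : edgesAt X u ⊆ edgesAt Y u :=
  filter_subset_filter _ h

theorem sum_card_edgesAt [Fintype α] {X : Finset (Sym2 α)} (hX : ∀ e ∈ X, ¬e.IsDiag) :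
    ∑ u, #(edgesAt X u) = 2 * #X := by
  simp_rw [edgesAt, card_filter]
  rw [sum_comm, card_eq_sum_ones, mul_sum]
  refine sum_congr rfl fun e he => ?_
  rw [← Sym2.card_toFinset_of_not_isDiag e (hX e he), card_eq_sum_ones, ← sum_filter,
    mul_one]
  congr 1
  ext u
  simp

theorem card_edgesAt_symmDiff (X Y : Finset (Sym2 α)) (u : α) :
    #(edgesAt (X ∆ Y) u) + 2 * #(edgesAt (X ∩ Y) u) =
      #(edgesAt X u) + #(edgesAt Y u) := by
  have hsymmDiff : edgesAt (X ∆ Y) u = edgesAt X u ∆ edgesAt Y u := by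
    ext e
    simp only [mem_edgesAt, mem_symmDiff]
    tauto
  rw [hsymmDiff, show edgesAt (X ∩ Y) u = edgesAt X u ∩ edgesAt Y u from
    filter_inter_distrib _ _ _]
  exact card_symmDiff_add_two_mul_card_inter _ _

variable {A N : Finset (Sym2 α)}

theorem two_mul_card_edgesAt_inter_le (hN : ∀ u, #(edgesAt N u) ≤ 1)
    (hA : ∀ u, #(edgesAt A u) = 0 ∨ #(edgesAt A u) = 2) (u : α) :
    2 * #(edgesAt (A ∩ N) u) ≤ #(edgesAt A u) := by
  have hle_A := card_le_card (edgesAt_mono (inter_subset_left : A ∩ N ⊆ A) u)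
  have hle_one := (card_le_card (edgesAt_mono (inter_subset_right : A ∩ N ⊆ N) u)).trans (hN u)
  have := hA u
  omega

theorem two_mul_card_inter_le_card [Fintype α] (hAdiag : ∀ e ∈ A, ¬e.IsDiag)
    (hN : ∀ u, #(edgesAt N u) ≤ 1) (hA : ∀ u, #(edgesAt A u) = 0 ∨ #(edgesAt A u) = 2) :
    2 * #(A ∩ N) ≤ #A := by
  have := sum_le_sum (s := univ) fun u _ => two_mul_card_edgesAt_inter_le hN hA u
  rw [← mul_sum, sum_card_edgesAt hAdiag,
    sum_card_edgesAt fun e he => hAdiag e (mem_of_mem_inter_left he)] at this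
  omega

theorem two_mul_card_edgesAt_inter_eq_of_two_mul_card_inter_eq [Fintype α]
    (hAdiag : ∀ e ∈ A, ¬e.IsDiag) (hN : ∀ u, #(edgesAt N u) ≤ 1)
    (hA : ∀ u, #(edgesAt A u) = 0 ∨ #(edgesAt A u) = 2) (heq : 2 * #(A ∩ N) = #A) (u : α) :
    2 * #(edgesAt (A ∩ N) u) = #(edgesAt A u) := by
  refine (sum_eq_sum_iff_of_le fun u _ => two_mul_card_edgesAt_inter_le hN hA u).mp ?_ u
    (mem_univ u)
  rw [← mul_sum, sum_card_edgesAt hAdiag,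
    sum_card_edgesAt fun e he => hAdiag e (mem_of_mem_inter_left he), heq]

end

section

variable {α : Type} [DecidableEq α] {G : SimpleGraph α}

theorem isPM_iff_card_edgesAt {M : Finset (Sym2 α)} :
    IsPM G M ↔ (∀ e ∈ M, e ∈ G.edgeSet) ∧ ∀ u, #(edgesAt M u) = 1 := by
  simp only [IsPM, card_eq_one_iff_existsUnique, mem_edgesAt]

theorem IsPM.symmDiff {M A : Finset (Sym2 α)} (hM : IsPM G M) (hA : ∀ e ∈ A, e ∈ G.edgeSet)
    (halt : ∀ u, 2 * #(edgesAt (A ∩ M) u) = #(edgesAt A u)) : IsPM G (A ∆ M) := by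
  rw [isPM_iff_card_edgesAt] at hM ⊢
  refine ⟨fun e he => ?_, fun u => ?_⟩
  · rcases mem_symmDiff.mp he with h | h
    exacts [hA e h.1, hM.1 e h.1]
  · linarith [card_edgesAt_symmDiff A M u, halt u, hM.2 u]

theorem SimpleGraph.Walk.IsCycle.card_edgesAt_eq_zero_or_two {v : α} {c : G.Walk v v}
    (hc : c.IsCycle) (u : α) :
    #(edgesAt c.edges.toFinset u) = 0 ∨ #(edgesAt c.edges.toFinset u) = 2 := by
  by_cases hu : u ∈ c.support
  · right
    rw [← hc.ncard_neighborSet_toSubgraph_eq_two hu, ← Set.ncard_coe_finset,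
      ← Set.ncard_image_of_injective (c.toSubgraph.neighborSet u)
        (f := fun w => s(u, w)) fun _ _ => Sym2.congr_right.mp]
    refine congrArg Set.ncard (Set.ext fun e => ?_)
    rw [Set.mem_image, mem_coe, mem_edgesAt, List.mem_toFinset, Sym2.mem_iff_exists]
    simp only [Subgraph.mem_neighborSet, adj_toSubgraph_iff_mem_edges]
    constructor
    · rintro ⟨w, hw, rfl⟩
      exact ⟨hw, w, rfl⟩
    · rintro ⟨he, w, rfl⟩
      exact ⟨w, he, rfl⟩
  · left
    refine card_eq_zero.mpr (eq_empty_iff_forall_notMem.mpr fun e he => hu ?_)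
    rw [mem_edgesAt, List.mem_toFinset] at he
    exact c.mem_support_of_mem_edges he.1 he.2

theorem wt_symmDiff (w : Sym2 α → ℤ) (A M : Finset (Sym2 α)) :
    wt w (A ∆ M) = wt w M + ∑ e ∈ A \ M, w e - ∑ e ∈ A ∩ M, w e := by
  have h₁ := sum_symmDiff_add_two_nsmul_sum_inter A M w
  have h₂ := sum_inter_add_sum_sdiff A M w
  rw [two_nsmul] at h₁
  unfold wt
  linarith

theorem cycWt_eq_sum_toFinset (w : Sym2 α → ℤ) {v : α} {c : G.Walk v v} (hc : c.edges.Nodup) :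
    cycWt w c = ∑ e ∈ c.edges.toFinset, w e :=
  (List.sum_toFinset w hc).symm

end

/-- **Lemma (the modified weights are conservative).** Let `M` be a minimum-weight perfect
matching of `G` with non-negative weights `w : E → ℕ`, let `r ≥ w(M)` be an integer, and
define `w'(e) = -w(e) - r - 1` for `e ∈ M` and `w'(e) = w(e) + r + 1` for `e ∉ M`. Then
`w'` is conservative: every cycle of `G` has non-negative total `w'`-weight. -/
theorem modified_weights_conservative (G : SimpleGraph V) (w : Sym2 V → ℕ)
    (M : Finset (Sym2 V)) (hM : IsPM G M)
    (hmin : ∀ M' : Finset (Sym2 V), IsPM G M' →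
      wt (fun e => (w e : ℤ)) M ≤ wt (fun e => (w e : ℤ)) M')
    (r : ℤ) (hr : wt (fun e => (w e : ℤ)) M ≤ r)
    (w' : Sym2 V → ℤ)
    (hw' : ∀ e : Sym2 V,
      w' e = if e ∈ M then -(w e : ℤ) - r - 1 else (w e : ℤ) + r + 1) :
    ∀ (v : V) (c : G.Walk v v), c.IsCycle → 0 ≤ cycWt w' c := by
  intro v c hc
  set A := c.edges.toFinset
  have hAG : ∀ e ∈ A, e ∈ G.edgeSet := fun e he =>
    c.edges_subset_edgeSet (List.mem_toFinset.mp he)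
  have hAdiag : ∀ e ∈ A, ¬e.IsDiag := fun e he => G.not_isDiag_of_mem_edgeSet (hAG e he)
  have hMdeg : ∀ u, #(edgesAt M u) ≤ 1 := fun u => ((isPM_iff_card_edgesAt.mp hM).2 u).le
  have hAdeg := hc.card_edgesAt_eq_zero_or_two
  have hweight : cycWt w' c = ∑ e ∈ A \ M, (w e : ℤ) - ∑ e ∈ A ∩ M, (w e : ℤ) +
      (r + 1) * (#A - 2 * #(A ∩ M)) := by
    rw [cycWt_eq_sum_toFinset w' hc.edges_nodup, ← sum_ite_mem_neg_sub_add]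
    refine sum_congr rfl fun e _ => ?_
    rw [hw']
    split_ifs <;> ring
  have hAM_nonneg : 0 ≤ ∑ e ∈ A ∩ M, (w e : ℤ) := sum_nonneg fun _ _ => by positivity
  have hAM_le : ∑ e ∈ A ∩ M, (w e : ℤ) ≤ r :=
    (sum_le_sum_of_subset_of_nonneg inter_subset_right fun _ _ _ => by positivity).trans hr
  have hAdiffM_nonneg : 0 ≤ ∑ e ∈ A \ M, (w e : ℤ) := sum_nonneg fun _ _ => by positivity
  rcases (two_mul_card_inter_le_card hAdiag hMdeg hAdeg).lt_or_eq with hlt | heq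
  · have hgap : (1 : ℤ) ≤ #A - 2 * #(A ∩ M) := by omega
    have := le_mul_of_one_le_right (by linarith : 0 ≤ r + 1) hgap
    rw [hweight]
    linarith
  · have hPM := hM.symmDiff hAG
      (two_mul_card_edgesAt_inter_eq_of_two_mul_card_inter_eq hAdiag hMdeg hAdeg heq)
    have hswap := hmin _ hPM
    rw [wt_symmDiff] at hswap
    rw [hweight, ← heq]
    push_cast
    linarith
end

section
/- Let G = (V, E) be a finite simple undirected graph with non-negative edge weights w : E → ℕ, let M be a minimum-weight perfect matching of G, let r ≥ w(M) be an integer, define w' : E → ℤ by w'(e) = −w(e) − r − 1 for e ∈ M and w'(e) = w(e) + r + 1 for e ∉ M, and let C₁, …, C_p be pairwise vertex-disjoint M-alternating cycles in G. Then M Δ C₁ Δ ⋯ Δ C_p is a perfect matching of G and w(M Δ C₁ Δ ⋯ Δ C_p) = w(M) + Σᵢ w'(Cᵢ). -/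
open scoped symmDiff

variable {V : Type} [Fintype V] [DecidableEq V]

instance : Std.Commutative (α := Finset (Sym2 V)) (· ∆ ·) := ⟨symmDiff_comm⟩
instance : Std.Associative (α := Finset (Sym2 V)) (· ∆ ·) := ⟨symmDiff_assoc⟩

/-
Vertex-disjoint cycles are edge-disjoint, so each `Cᵢ` is still `N`-alternating for
`N = M ∆ C₁ ∆ ⋯ ∆ Cᵢ₋₁`, and switching a perfect matching `N` along an `N`-alternating cycle
gives a perfect matching again: every vertex of the cycle trades its `N`-edge for the other cycle
edge at it. Double counting the vertices of an alternating cycle shows that it has as many edges in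
`M` as outside `M`, so the shifts `∓(r + 1)` in `w'` cancel along it, and `w'(Cᵢ)` is exactly the
weight gained by switching along `Cᵢ`.
-/

open Finset Function

namespace Finset

variable {α ι R : Type*} [DecidableEq α] [AddCommGroup R]

theorem sum_symmDiff (s t : Finset α) (f : α → R) :
    ∑ x ∈ s ∆ t, f x = ∑ x ∈ s, f x + ∑ x ∈ t, if x ∈ s then -f x else f x := by
  rw [symmDiff_def, sup_eq_union, sum_union disjoint_sdiff_sdiff, sum_ite, filter_mem_eq_inter,
    ← sdiff_eq_filter, sum_neg_distrib, ← sum_inter_add_sum_sdiff s t f, inter_comm]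
  abel

theorem filter_symmDiff (p : α → Prop) [DecidablePred p] (s t : Finset α) :
    (s ∆ t).filter p = s.filter p ∆ t.filter p := by
  ext
  simp only [mem_filter, mem_symmDiff]
  tauto

theorem filter_sdiff (p : α → Prop) [DecidablePred p] (s t : Finset α) :
    (s \ t).filter p = s.filter p \ t := by
  grind

-- Without `(β := Finset α)` the operator `(· ∆ ·)` is elaborated before its type is known and its
-- `Std.Commutative` instance is not found.
theorem mem_fold_symmDiff_iff_of_mem {f : ι → Finset α} (hf : Pairwise (Disjoint on f))
    (M : Finset α) {s : Finset ι} {i : ι} (hi : i ∉ s) {a : α} (ha : a ∈ f i) :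
    a ∈ s.fold (β := Finset α) (· ∆ ·) M f ↔ a ∈ M := by
  classical
  induction s using Finset.induction_on with
  | empty => rfl
  | insert j s hj ih =>
    rw [mem_insert, not_or] at hi
    have haj : a ∉ f j := disjoint_left.mp (hf hi.1) ha
    rw [fold_insert hj, mem_symmDiff, ih hi.2]
    tauto

theorem sum_fold_symmDiff {f : ι → Finset α} (hf : Pairwise (Disjoint on f)) (M : Finset α)
    (w : α → R) (s : Finset ι) :
    ∑ x ∈ s.fold (β := Finset α) (· ∆ ·) M f, w x =
      ∑ x ∈ M, w x + ∑ i ∈ s, ∑ x ∈ f i, if x ∈ M then -w x else w x := by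
  classical
  induction s using Finset.induction_on with
  | empty => simp
  | insert i s hi ih =>
    have hagree : ∑ x ∈ f i, (if x ∈ s.fold (β := Finset α) (· ∆ ·) M f then -w x else w x) =
        ∑ x ∈ f i, if x ∈ M then -w x else w x :=
      sum_congr rfl fun x hx => if_congr (mem_fold_symmDiff_iff_of_mem hf M hi hx) rfl rfl
    rw [fold_insert hi, symmDiff_comm, sum_symmDiff, ih, hagree, sum_insert hi]
    abel

end Finset

section

variable {V : Type} {G : SimpleGraph V} {M N : Finset (Sym2 V)} {u : V} {c : G.Walk u u}

theorem IsAltCycle.of_forall_mem_edges_iff (hc : IsAltCycle G M c)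
    (h : ∀ e ∈ c.edges, e ∈ N ↔ e ∈ M) : IsAltCycle G N c := by
  refine ⟨hc.1, fun v hv => (existsUnique_congr fun e => ?_).mp (hc.2 v hv)⟩
  exact ⟨fun ⟨he, hve, heM⟩ => ⟨he, hve, (h e he).mpr heM⟩,
    fun ⟨he, hve, heN⟩ => ⟨he, hve, (h e he).mp heN⟩⟩

variable [DecidableEq V]

namespace SimpleGraph.Walk

theorem disjoint_edges_toFinset_of_support {v x y : V} {p : G.Walk u v} {q : G.Walk x y}
    (h : ∀ z ∈ p.support, z ∉ q.support) : Disjoint p.edges.toFinset q.edges.toFinset := by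
  refine Finset.disjoint_left.mpr fun e hp hq => ?_
  rw [List.mem_toFinset] at hp hq
  induction e with
  | h a b => exact h a (p.fst_mem_support_of_mem_edges hp) (q.fst_mem_support_of_mem_edges hq)

theorem IsCycle.exists_filter_edges_eq_pair {v : V} (hc : c.IsCycle)
    (hv : v ∈ c.support) : ∃ e₁ e₂, e₁ ≠ e₂ ∧ c.edges.toFinset.filter (v ∈ ·) = {e₁, e₂} := by
  obtain ⟨x, y, hxy, hnbr⟩ := Set.ncard_eq_two.mp (hc.ncard_neighborSet_toSubgraph_eq_two hv)
  have hmem : ∀ z, s(v, z) ∈ c.edges ↔ z = x ∨ z = y := fun z => by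
    rw [← adj_toSubgraph_iff_mem_edges, ← Subgraph.mem_neighborSet, hnbr]
    rfl
  refine ⟨s(v, x), s(v, y), fun h => hxy (Sym2.congr_right.mp h), ?_⟩
  ext e
  simp only [mem_filter, List.mem_toFinset, mem_insert, mem_singleton]
  constructor
  · rintro ⟨he, hve⟩
    obtain ⟨z, rfl⟩ := Sym2.mem_iff_exists.mp hve
    rcases (hmem z).mp he with rfl | rfl <;> simp
  · rintro (rfl | rfl)
    exacts [⟨(hmem x).mpr (Or.inl rfl), Sym2.mem_mk_left _ _⟩,
      ⟨(hmem y).mpr (Or.inr rfl), Sym2.mem_mk_left _ _⟩]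

theorem card_support_toFinset_eq_two_mul {v : V} (p : G.Walk u v) {P : Finset (Sym2 V)}
    (hP : P ⊆ p.edges.toFinset) (hone : ∀ x ∈ p.support, #(P.filter (x ∈ ·)) = 1) :
    #p.support.toFinset = 2 * #P := by
  have hcount := sum_card_bipartiteAbove_eq_sum_card_bipartiteBelow
    (s := p.support.toFinset) (t := P) (r := fun x e => x ∈ e)
  have hends : ∀ e ∈ P, #(p.support.toFinset.bipartiteBelow (fun x e => x ∈ e) e) = 2 := by
    intro e he
    have he' := List.mem_toFinset.mp (hP he)
    have : p.support.toFinset.bipartiteBelow (fun x e => x ∈ e) e = e.toFinset := by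
      ext x
      simpa using fun hx => p.mem_support_of_mem_edges he' hx
    rw [this, Sym2.card_toFinset_of_not_isDiag _
      (G.not_isDiag_of_mem_edgeSet (p.edges_subset_edgeSet he'))]
  have hincident : ∀ x ∈ p.support.toFinset, #(P.bipartiteAbove (fun x e => x ∈ e) x) = 1 :=
    fun x hx => hone x (List.mem_toFinset.mp hx)
  rw [sum_congr rfl hincident, sum_congr rfl hends] at hcount
  simpa [mul_comm] using hcount

end SimpleGraph.Walk

theorem isPM_iff_card_filter :
    IsPM G M ↔ (∀ e ∈ M, e ∈ G.edgeSet) ∧ ∀ v, #(M.filter (v ∈ ·)) = 1 := by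
  simp only [IsPM, card_eq_one_iff_existsUnique, mem_filter]

theorem IsAltCycle.exists_filter_edges_eq_pair (hc : IsAltCycle G M c) {v : V}
    (hv : v ∈ c.support) :
    ∃ e₁ e₂, e₁ ∈ M ∧ e₂ ∉ M ∧ c.edges.toFinset.filter (v ∈ ·) = {e₁, e₂} := by
  obtain ⟨e₁, e₂, hne, hpair⟩ := hc.1.exists_filter_edges_eq_pair hv
  obtain ⟨e, ⟨he, hve, heM⟩, huniq⟩ := hc.2 v hv
  have hnotM : ∀ e' ∈ c.edges.toFinset.filter (v ∈ ·), e' ≠ e → e' ∉ M := by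
    intro e' he' hne' heM'
    rw [mem_filter, List.mem_toFinset] at he'
    exact hne' (huniq e' ⟨he'.1, he'.2, heM'⟩)
  have heC : e ∈ c.edges.toFinset.filter (v ∈ ·) :=
    mem_filter.mpr ⟨List.mem_toFinset.mpr he, hve⟩
  rw [hpair, mem_insert, mem_singleton] at heC
  rcases heC with rfl | rfl
  · exact ⟨e, e₂, heM, hnotM e₂ (by simp [hpair]) hne.symm, hpair⟩
  · exact ⟨e, e₁, heM, hnotM e₁ (by simp [hpair]) hne, by rw [hpair, pair_comm]⟩

theorem IsAltCycle.card_inter_eq_card_sdiff (hc : IsAltCycle G M c) :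
    #(c.edges.toFinset ∩ M) = #(c.edges.toFinset \ M) := by
  have hin : ∀ v ∈ c.support, #((c.edges.toFinset ∩ M).filter (v ∈ ·)) = 1 := by
    intro v hv
    obtain ⟨e₁, e₂, h₁, h₂, hpair⟩ := hc.exists_filter_edges_eq_pair hv
    rw [← filter_inter, hpair, card_eq_one]
    exact ⟨e₁, by grind⟩
  have hout : ∀ v ∈ c.support, #((c.edges.toFinset \ M).filter (v ∈ ·)) = 1 := by
    intro v hv
    obtain ⟨e₁, e₂, h₁, h₂, hpair⟩ := hc.exists_filter_edges_eq_pair hv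
    rw [filter_sdiff, hpair, card_eq_one]
    exact ⟨e₂, by grind⟩
  have := c.card_support_toFinset_eq_two_mul inter_subset_left hin
  have := c.card_support_toFinset_eq_two_mul sdiff_subset hout
  omega

theorem IsAltCycle.cycWt_shift_eq (hc : IsAltCycle G M c) (w : Sym2 V → ℤ) (k : ℤ) :
    cycWt (fun e => if e ∈ M then -w e - k else w e + k) c =
      ∑ e ∈ c.edges.toFinset, if e ∈ M then -w e else w e := by
  rw [cycWt, ← List.sum_toFinset _ hc.1.edges_nodup]
  simp only [sum_ite, filter_mem_eq_inter, ← sdiff_eq_filter, sum_sub_distrib, sum_add_distrib,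
    sum_const, hc.card_inter_eq_card_sdiff]
  ring

theorem IsPM.symmDiff_edges_of_isAltCycle (hN : IsPM G N) (hc : IsAltCycle G N c) :
    IsPM G (N ∆ c.edges.toFinset) := by
  rw [isPM_iff_card_filter] at hN ⊢
  refine ⟨fun e he => ?_, fun v => ?_⟩
  · rcases mem_symmDiff.mp he with ⟨h, -⟩ | ⟨h, -⟩
    exacts [hN.1 e h, c.edges_subset_edgeSet (List.mem_toFinset.mp h)]
  rw [filter_symmDiff]
  by_cases hv : v ∈ c.support
  · obtain ⟨e₁, e₂, h₁, h₂, hpair⟩ := hc.exists_filter_edges_eq_pair hv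
    -- The only `N`-edge at `v` is the cycle edge `e₁`, so after switching only `e₂` is left.
    obtain ⟨e, he⟩ := card_eq_one.mp (hN.2 v)
    have he₁C : e₁ ∈ c.edges.toFinset.filter (v ∈ ·) := by
      rw [hpair]
      exact mem_insert_self e₁ {e₂}
    have he₁ : e₁ ∈ N.filter (v ∈ ·) := mem_filter.mpr ⟨h₁, (mem_filter.mp he₁C).2⟩
    rw [he, mem_singleton] at he₁
    subst he₁
    rw [he, hpair, card_eq_one]
    exact ⟨e₂, by ext; simp only [mem_symmDiff, mem_insert, mem_singleton]; grind⟩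
  · have : c.edges.toFinset.filter (v ∈ ·) = ∅ := filter_eq_empty_iff.mpr fun e he hve =>
      hv (c.mem_support_of_mem_edges (List.mem_toFinset.mp he) hve)
    rw [this, ← bot_eq_empty, symmDiff_bot]
    exact hN.2 v

theorem IsPM.fold_symmDiff_edges {ι : Type*} (hM : IsPM G M) {a : ι → V}
    {c : ∀ i, G.Walk (a i) (a i)} (halt : ∀ i, IsAltCycle G M (c i))
    (hdisj : Pairwise (Disjoint on fun i => (c i).edges.toFinset)) (s : Finset ι) :
    IsPM G (s.fold (· ∆ ·) M fun i => (c i).edges.toFinset) := by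
  classical
  induction s using Finset.induction_on with
  | empty => exact hM
  | insert i s hi ih =>
    rw [fold_insert hi, symmDiff_comm]
    exact ih.symmDiff_edges_of_isAltCycle <| (halt i).of_forall_mem_edges_iff fun e he =>
      mem_fold_symmDiff_iff_of_mem hdisj M hi (List.mem_toFinset.mpr he)

end

theorem switching_along_disjoint_alternating_cycles_general (G : SimpleGraph V) (w : Sym2 V → ℕ)
    (M : Finset (Sym2 V)) (hM : IsPM G M)
    (r : ℤ)
    (w' : Sym2 V → ℤ)
    (hw' : ∀ e : Sym2 V,
      w' e = if e ∈ M then -(w e : ℤ) - r - 1 else (w e : ℤ) + r + 1)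
    (p : ℕ) (a : Fin p → V) (c : ∀ i : Fin p, G.Walk (a i) (a i))
    (halt : ∀ i : Fin p, IsAltCycle G M (c i))
    (hdisj : ∀ i j : Fin p, i ≠ j → ∀ u : V, u ∈ (c i).support → u ∉ (c j).support) :
    IsPM G (Finset.univ.fold (· ∆ ·) M (fun i : Fin p => (c i).edges.toFinset)) ∧
      wt (fun e => (w e : ℤ))
          (Finset.univ.fold (· ∆ ·) M (fun i : Fin p => (c i).edges.toFinset)) =
        wt (fun e => (w e : ℤ)) M + ∑ i : Fin p, cycWt w' (c i) := by
  have hedges : Pairwise (Disjoint on fun i => (c i).edges.toFinset) := fun i j hij =>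
    SimpleGraph.Walk.disjoint_edges_toFinset_of_support (hdisj i j hij)
  have hw'_eq : w' = fun e => if e ∈ M then -(w e : ℤ) - (r + 1) else (w e : ℤ) + (r + 1) :=
    funext fun e => by rw [hw' e]; split_ifs <;> ring
  refine ⟨hM.fold_symmDiff_edges halt hedges univ, ?_⟩
  simp only [wt, sum_fold_symmDiff hedges, hw'_eq, (halt _).cycWt_shift_eq]

/-- **Lemma (switching along disjoint alternating cycles).** Let `M` be a minimum-weight
perfect matching of `G` with non-negative weights `w : E → ℕ`, let `r ≥ w(M)` be an
integer, define `w'(e) = -w(e) - r - 1` for `e ∈ M` and `w'(e) = w(e) + r + 1` for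
`e ∉ M`, and let `C₁, …, C_p` be pairwise vertex-disjoint `M`-alternating cycles of `G`.
Then `M ∆ C₁ ∆ ⋯ ∆ C_p` is a perfect matching of `G` of weight
`w(M) + ∑ᵢ w'(Cᵢ)`. -/
theorem switching_along_disjoint_alternating_cycles (G : SimpleGraph V) (w : Sym2 V → ℕ)
    (M : Finset (Sym2 V)) (hM : IsPM G M)
    (hmin : ∀ M' : Finset (Sym2 V), IsPM G M' →
      wt (fun e => (w e : ℤ)) M ≤ wt (fun e => (w e : ℤ)) M')
    (r : ℤ) (hr : wt (fun e => (w e : ℤ)) M ≤ r)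
    (w' : Sym2 V → ℤ)
    (hw' : ∀ e : Sym2 V,
      w' e = if e ∈ M then -(w e : ℤ) - r - 1 else (w e : ℤ) + r + 1)
    (p : ℕ) (a : Fin p → V) (c : ∀ i : Fin p, G.Walk (a i) (a i))
    (halt : ∀ i : Fin p, IsAltCycle G M (c i))
    (hdisj : ∀ i j : Fin p, i ≠ j → ∀ u : V, u ∈ (c i).support → u ∉ (c j).support) :
    IsPM G (Finset.univ.fold (· ∆ ·) M (fun i : Fin p => (c i).edges.toFinset)) ∧
      wt (fun e => (w e : ℤ))
          (Finset.univ.fold (· ∆ ·) M (fun i : Fin p => (c i).edges.toFinset)) =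
        wt (fun e => (w e : ℤ)) M + ∑ i : Fin p, cycWt w' (c i) :=
  switching_along_disjoint_alternating_cycles_general G w M hM r w' hw' p a c halt hdisj
end

section
/- For every natural number ℓ ≥ 2 there exist a finite simple undirected bipartite graph G = (V, E) with edge weights w : E → ℤ and an ℓ-th smallest perfect matching M of G such that for every set of edges F ⊆ E with |F| < ℓ − 1, the minimum of w(M') over all perfect matchings M' of G with F ⊆ M' is not equal to w(M). (Hence the bound ℓ − 1 on the number of fixed edges for bipartite graphs is tight.) -/
variable {V : Type} [Fintype V] [DecidableEq V]

/-! Take `ℓ - 1` disjoint 4-cycles and give weight `1` to one edge of each cycle, `0` to the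
others. A perfect matching uses, in each cycle, either its two even or its two odd edges, so the
perfect matchings correspond to the sets `S` of cycles where the odd edges are used, with weight
`|S|`; hence the `ℓ`-th smallest ones are those of weight `ℓ - 1`. The all-odd matching is the only
one of that weight, and a set of fewer than `ℓ - 1` of its edges misses some cycle, where switching
to the even edges gives a lighter perfect matching containing the set. -/

section PerfectMatchings

variable {α : Type} {G : SimpleGraph α}

theorem IsPM.eq_of_mem_of_mem {M : Finset (Sym2 α)} (hM : IsPM G M) {e f : Sym2 α} {v : α}
    (he : e ∈ M) (hf : f ∈ M) (hve : v ∈ e) (hvf : v ∈ f) : e = f :=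
  (hM.2 v).unique ⟨he, hve⟩ ⟨hf, hvf⟩

theorem IsPM.eq_of_subset {M N : Finset (Sym2 α)} (hM : IsPM G M) (hN : IsPM G N)
    (hMN : M ⊆ N) : M = N := by
  refine hMN.antisymm fun e he => ?_
  obtain ⟨f, ⟨hf, hvf⟩, -⟩ := hM.2 (Quot.out e).1
  rwa [hN.eq_of_mem_of_mem he (hMN hf) (Sym2.out_fst_mem e) hvf]

theorem nthSmallest_succ_iff {w : Sym2 α → ℤ} {k : ℕ}
    (hnonneg : ∀ M, IsPM G M → 0 ≤ wt w M)
    (hattain : ∀ j ≤ k, ∃ M, IsPM G M ∧ wt w M = j) :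
    ∀ j ≤ k, ∀ M, NthSmallest G w (j + 1) M ↔ IsPM G M ∧ wt w M = j := by
  intro j
  induction j using Nat.strong_induction_on with
  | _ j ih =>
  intro hj M
  have not_earlier : ∀ M', IsPM G M' →
      ((∀ ℓ', 1 ≤ ℓ' → ℓ' < j + 1 → ¬ NthSmallest G w ℓ' M') ↔ (j : ℤ) ≤ wt w M') := by
    intro M' hM'
    constructor
    · intro h
      by_contra! hlt
      lift wt w M' to ℕ using hnonneg M' hM' with i hi
      exact h (i + 1) le_add_self (by omega) ((ih i (by omega) (by omega) M').2 ⟨hM', hi.symm⟩)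
    · rintro hle (_ | i) h1 h2 hi
      · omega
      · have := ((ih i (by omega) (by omega) M').1 hi).2
        omega
  rw [NthSmallest]
  constructor
  · rintro ⟨hM, hlow, hmin⟩
    obtain ⟨T, hT, hwT⟩ := hattain j hj
    have hle := hmin T hT ((not_earlier T hT).2 hwT.ge)
    exact ⟨hM, le_antisymm (hwT ▸ hle) ((not_earlier M hM).1 hlow)⟩
  · rintro ⟨hM, hwM⟩
    exact ⟨hM, (not_earlier M hM).2 hwM.ge,
      fun M' hM' hlow => hwM ▸ (not_earlier M' hM').1 hlow⟩

end PerfectMatchings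

namespace FourCycles

open Finset SimpleGraph

variable {k : ℕ}

/-- `⊥ □ H` is the disjoint union of `k` copies of `H`. -/
def graph (k : ℕ) : SimpleGraph (Fin (k * 4)) :=
  (⊥ □ cycleGraph 4 : SimpleGraph (Fin k × Fin 4)).comap finProdFinEquiv.symm

def vertex (i : Fin k) (r : Fin 4) : Fin (k * 4) := finProdFinEquiv (i, r)

theorem exists_eq_vertex (v : Fin (k * 4)) : ∃ i r, v = vertex i r :=
  ⟨_, _, (finProdFinEquiv.apply_symm_apply v).symm⟩

theorem vertex_inj {i j : Fin k} {r s : Fin 4} : vertex i r = vertex j s ↔ i = j ∧ r = s := by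
  simp [vertex, finProdFinEquiv.apply_eq_iff_eq]

theorem graph_adj {i j : Fin k} {r s : Fin 4} :
    (graph k).Adj (vertex i r) (vertex j s) ↔ i = j ∧ (r - s = 1 ∨ s - r = 1) := by
  simp [graph, vertex, boxProd_adj, cycleGraph_adj, and_comm]

def edge (i : Fin k) (r : Fin 4) : Sym2 (Fin (k * 4)) := s(vertex i r, vertex i (r + 1))

theorem edge_mem_edgeSet (i : Fin k) (r : Fin 4) : edge i r ∈ (graph k).edgeSet := by
  simp [edge, graph_adj]

theorem vertex_mem_edge {i j : Fin k} {r s : Fin 4} :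
    vertex j s ∈ edge i r ↔ j = i ∧ (s = r ∨ s = r + 1) := by
  simp only [edge, Sym2.mem_iff, vertex_inj]
  tauto

theorem edge_inj {i j : Fin k} {r s : Fin 4} : edge i r = edge j s ↔ i = j ∧ r = s := by
  refine ⟨fun h => ?_, fun ⟨hij, hrs⟩ => hij ▸ hrs ▸ rfl⟩
  simp only [edge, Sym2.eq_iff, vertex_inj] at h
  have : ∀ r s : Fin 4, r + 1 = s → r = s + 1 → False := by decide
  rcases h with ⟨⟨hij, hrs⟩, -⟩ | ⟨⟨hij, h₁⟩, -, h₂⟩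
  · exact ⟨hij, hrs⟩
  · exact (this r s h₂ h₁).elim

theorem exists_eq_edge {e : Sym2 (Fin (k * 4))} (he : e ∈ (graph k).edgeSet) :
    ∃ i r, e = edge i r := by
  induction e using Sym2.ind with
  | _ u v =>
  obtain ⟨i, r, rfl⟩ := exists_eq_vertex u
  obtain ⟨j, s, rfl⟩ := exists_eq_vertex v
  obtain ⟨rfl, h | h⟩ := graph_adj.1 he
  · refine ⟨i, s, ?_⟩
    rw [edge, Sym2.eq_swap, ← h, add_sub_cancel]
  · exact ⟨i, r, by rw [edge, ← h, add_sub_cancel]⟩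

def matching (S : Finset (Fin k)) : Finset (Sym2 (Fin (k * 4))) :=
  (univ.filter fun p : Fin k × Fin 4 => p.1 ∈ S ↔ p.2.val % 2 = 1).image fun p => edge p.1 p.2

theorem mem_matching {S : Finset (Fin k)} {e : Sym2 (Fin (k * 4))} :
    e ∈ matching S ↔ ∃ i r, (i ∈ S ↔ r.val % 2 = 1) ∧ edge i r = e := by
  simp [matching]

theorem isPM_matching (S : Finset (Fin k)) : IsPM (graph k) (matching S) := by
  refine ⟨fun e he => ?_, fun v => ?_⟩
  · obtain ⟨i, r, -, rfl⟩ := mem_matching.1 he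
    exact edge_mem_edgeSet i r
  obtain ⟨i, s, rfl⟩ := exists_eq_vertex v
  have parity : ∀ (b : Prop) [Decidable b] (s : Fin 4),
      ∃ r : Fin 4, ((b ↔ r.val % 2 = 1) ∧ (s = r ∨ s = r + 1)) ∧
        ∀ r', (b ↔ r'.val % 2 = 1) ∧ (s = r' ∨ s = r' + 1) → r' = r := by
    intro b _; by_cases b <;> simp only [*, true_iff, false_iff] <;> decide
  obtain ⟨r, hr, hr_uniq⟩ := parity (i ∈ S) s
  refine ⟨edge i r, ⟨mem_matching.2 ⟨i, r, hr.1, rfl⟩, vertex_mem_edge.2 ⟨rfl, hr.2⟩⟩, ?_⟩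
  rintro e ⟨he, hv⟩
  obtain ⟨j, r', hr', rfl⟩ := mem_matching.1 he
  obtain ⟨rfl, hs⟩ := vertex_mem_edge.1 hv
  rw [hr_uniq r' ⟨hr', hs⟩]

def weight (e : Sym2 (Fin (k * 4))) : ℤ := if e ∈ univ.image fun i => edge i 1 then 1 else 0

theorem weight_edge (i : Fin k) (r : Fin 4) : weight (edge i r) = if r = 1 then 1 else 0 := by
  simp [weight, edge_inj, eq_comm]

theorem wt_matching (S : Finset (Fin k)) : wt weight (matching S) = S.card := by
  rw [wt, matching, sum_image fun p _ q _ h => Prod.ext_iff.2 (edge_inj.1 h), sum_filter,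
    Fintype.sum_prod_type]
  simp [Fin.sum_univ_four, weight_edge]

theorem exists_bipartition :
    ∃ X : Set (Fin (k * 4)), ∀ u v, (graph k).Adj u v → (u ∈ X ↔ v ∉ X) := by
  refine ⟨{v | (finProdFinEquiv.symm v).2.val % 2 = 0}, fun u v huv => ?_⟩
  obtain ⟨i, r, rfl⟩ := exists_eq_vertex u
  obtain ⟨j, s, rfl⟩ := exists_eq_vertex v
  have parity : ∀ r s : Fin 4, r - s = 1 ∨ s - r = 1 → (r.val % 2 = 0 ↔ ¬ s.val % 2 = 0) := by
    decide
  simpa only [Set.mem_ofPred_eq, vertex, Equiv.symm_apply_apply] using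
    parity r s (graph_adj.1 huv).2

theorem edge_succ_mem_iff {M : Finset (Sym2 (Fin (k * 4)))} (hM : IsPM (graph k) M)
    (i : Fin k) (r : Fin 4) : edge i (r + 1) ∈ M ↔ edge i r ∉ M := by
  have hv : vertex i (r + 1) ∈ edge i r ∧ vertex i (r + 1) ∈ edge i (r + 1) :=
    ⟨vertex_mem_edge.2 ⟨rfl, Or.inr rfl⟩, vertex_mem_edge.2 ⟨rfl, Or.inl rfl⟩⟩
  have covered : edge i (r + 1) ∈ M ∨ edge i r ∈ M := by
    obtain ⟨f, ⟨hf, hvf⟩, -⟩ := hM.2 (vertex i (r + 1))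
    obtain ⟨j, t, rfl⟩ := exists_eq_edge (hM.1 f hf)
    obtain ⟨rfl, h | h⟩ := vertex_mem_edge.1 hvf
    · exact Or.inl (h ▸ hf)
    · exact Or.inr (add_right_cancel h ▸ hf)
  have not_both : ¬ (edge i (r + 1) ∈ M ∧ edge i r ∈ M) := fun ⟨h₁, h₀⟩ => by
    have hne : ∀ r : Fin 4, r + 1 ≠ r := by decide
    exact hne r (edge_inj.1 (hM.eq_of_mem_of_mem h₁ h₀ hv.2 hv.1)).2
  tauto

theorem exists_eq_matching {M : Finset (Sym2 (Fin (k * 4)))} (hM : IsPM (graph k) M) :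
    ∃ S, M = matching S := by
  refine ⟨univ.filter fun i => edge i 1 ∈ M, hM.eq_of_subset (isPM_matching _) fun e he => ?_⟩
  obtain ⟨i, r, rfl⟩ := exists_eq_edge (hM.1 e he)
  refine mem_matching.2 ⟨i, r, ?_, rfl⟩
  have h₀ := edge_succ_mem_iff hM i 0
  have h₁ := edge_succ_mem_iff hM i 1
  have h₂ := edge_succ_mem_iff hM i 2
  simp only [mem_filter, mem_univ, true_and]
  fin_cases r <;> norm_num at h₀ h₁ h₂ he ⊢ <;> tauto

theorem nthSmallest_matching_univ :
    NthSmallest (graph k) weight (k + 1) (matching univ) := by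
  refine (nthSmallest_succ_iff (fun M hM => ?_) (fun j hj => ?_) k le_rfl _).2
    ⟨isPM_matching univ, by simp [wt_matching]⟩
  · obtain ⟨S, rfl⟩ := exists_eq_matching hM
    rw [wt_matching]
    positivity
  · obtain ⟨S, -, hS⟩ := exists_subset_card_eq (s := (univ : Finset (Fin k))) (by simpa using hj)
    exact ⟨matching S, isPM_matching S, by rw [wt_matching, hS]⟩

-- Reads off the cycle of one endpoint; meaningful on edges of `graph k`.
noncomputable def cycleOf (e : Sym2 (Fin (k * 4))) : Fin k :=
  (finProdFinEquiv.symm (Quot.out e).1).1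

theorem cycleOf_edge (i : Fin k) (r : Fin 4) : cycleOf (edge i r) = i := by
  obtain ⟨j, s, hv⟩ := exists_eq_vertex (Quot.out (edge i r)).1
  have hmem := Sym2.out_fst_mem (edge i r)
  rw [hv, vertex_mem_edge] at hmem
  rw [cycleOf, hv, vertex, Equiv.symm_apply_apply, hmem.1]

theorem subset_matching_image_cycleOf {F : Finset (Sym2 (Fin (k * 4)))}
    (hF : F ⊆ matching univ) : F ⊆ matching (F.image cycleOf) := by
  intro e he
  obtain ⟨i, r, hr, rfl⟩ := mem_matching.1 (hF he)
  have hi : i ∈ F.image cycleOf := mem_image.2 ⟨_, he, cycleOf_edge i r⟩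
  exact mem_matching.2 ⟨i, r, by simpa [hi] using hr, rfl⟩

end FourCycles

open FourCycles in
/-- **Tightness of the bound `ℓ - 1` for bipartite graphs.** For every `ℓ ≥ 2` there are a
finite bipartite graph `G` with integer edge weights `w` and an `ℓ`-th smallest perfect
matching `M` of `G` such that for every set `F` of fewer than `ℓ - 1` edges of `G`, the
minimum of `w(M')` over perfect matchings `M'` of `G` with `F ⊆ M'` is not `w(M)`. -/
theorem bipartite_bound_tight (ℓ : ℕ) (hℓ : 2 ≤ ℓ) :
    ∃ (n : ℕ) (G : SimpleGraph (Fin n)) (w : Sym2 (Fin n) → ℤ) (M : Finset (Sym2 (Fin n))),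
      (∃ X : Set (Fin n), ∀ u v : Fin n, G.Adj u v → (u ∈ X ↔ v ∉ X)) ∧
      NthSmallest G w ℓ M ∧
      ∀ F : Finset (Sym2 (Fin n)), (∀ e ∈ F, e ∈ G.edgeSet) → F.card < ℓ - 1 →
        ¬ IsLeast {k : ℤ | ∃ M' : Finset (Sym2 (Fin n)), IsPM G M' ∧ F ⊆ M' ∧ wt w M' = k}
            (wt w M) := by
  obtain ⟨k, rfl⟩ : ∃ k, ℓ = k + 1 := ⟨ℓ - 1, by omega⟩
  refine ⟨k * 4, graph k, weight, matching Finset.univ, exists_bipartition,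
    nthSmallest_matching_univ, fun F _ hcard hleast => ?_⟩
  obtain ⟨M', hM', hFM', hw⟩ := hleast.1
  obtain ⟨S, rfl⟩ := exists_eq_matching hM'
  have hS : S = Finset.univ :=
    Finset.eq_univ_of_card S (by simpa [wt_matching] using hw)
  have hle := hleast.2
    ⟨_, isPM_matching _, subset_matching_image_cycleOf (hS ▸ hFM'), rfl⟩
  have hT := F.card_image_le (f := cycleOf)
  simp only [wt_matching, Finset.card_univ, Fintype.card_fin] at hle
  omega
end

section
/- For every natural number ℓ ≥ 2 there exist a finite simple undirected graph G = (V, E) with edge weights w : E → ℤ and an ℓ-th smallest perfect matching M of G such that for every set of edges F ⊆ E with |F| < 2(ℓ − 1), the minimum of w(M') over all perfect matchings M' of G with F ⊆ M' is not equal to w(M). (Hence the bound 2(ℓ − 1) on the number of fixed edges for general graphs is tight.) -/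
variable {V : Type} [Fintype V] [DecidableEq V]

/-!
Take `k = ℓ - 1` disjoint copies of the triangular prism, weighted `+1` on one rung and `-1` on
the triangle edge opposite one end of that rung. A prism has one perfect matching of weight `1` (its three rungs)
and three of weight `0`, and the latter cover all its edges. Hence the perfect matchings of the
whole graph have exactly the weights `0, …, k`, and the all-rungs matching, of weight `k`, is
`ℓ`-th smallest. Fewer than `2k` fixed edges leave some copy with at most one fixed edge;
re-matching that copy by a weight-`0` matching through this edge keeps the fixed edges and lowers
the weight.
-/

open Finset SimpleGraph

lemma card_filter_lt_eq_iff {α : Type*} [LinearOrder α] (S : Finset α) (x : α) (n : ℕ) :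
    #{y ∈ S | y < x} = n ↔ n ≤ #{y ∈ S | y < x} ∧ ∀ y ∈ S, n ≤ #{z ∈ S | z < y} → x ≤ y := by
  constructor
  · rintro rfl
    refine ⟨le_rfl, fun y hy hle => not_lt.1 fun hyx => hle.not_gt (card_lt_card ?_)⟩
    refine (ssubset_iff_of_subset fun z hz => ?_).2 ⟨y, by simp [hy, hyx], by simp⟩
    simp only [mem_filter] at hz ⊢
    exact ⟨hz.1, hz.2.trans hyx⟩
  · rintro ⟨hn, hmin⟩
    refine le_antisymm (not_lt.1 fun hlt => ?_) hn
    obtain ⟨y, hyT, hymax⟩ := exists_max_image {y ∈ S | y < x} id (card_pos.1 (by omega))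
    have hbelow : ({y ∈ S | y < x}.erase y) ⊆ {z ∈ S | z < y} := fun z hz => by
      have hzy := lt_of_le_of_ne (hymax z (mem_of_mem_erase hz)) (ne_of_mem_erase hz)
      exact mem_filter.2 ⟨(mem_filter.1 (mem_of_mem_erase hz)).1, hzy⟩
    have := card_le_card hbelow
    rw [card_erase_of_mem hyT] at this
    rw [mem_filter] at hyT
    exact (hmin y hyT.1 (by omega)).not_gt hyT.2

omit [Fintype V] in
lemma isPM_iff_card_filter_mem {G : SimpleGraph V} {M : Finset (Sym2 V)} :
    IsPM G M ↔ (∀ e ∈ M, e ∈ G.edgeSet) ∧ ∀ v, #{e ∈ M | v ∈ e} = 1 := by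
  simp only [IsPM, ExistsUnique, card_eq_one, eq_singleton_iff_unique_mem, mem_filter]

section Rank

variable {G : SimpleGraph V} {w : Sym2 V → ℤ}

variable (G w) in
noncomputable def pmWeights : Finset ℤ :=
  open Classical in (univ.filter (IsPM G)).image (wt w)

omit [DecidableEq V] in
lemma mem_pmWeights {x : ℤ} : x ∈ pmWeights G w ↔ ∃ M, IsPM G M ∧ wt w M = x := by
  classical
  simp [pmWeights]

omit [DecidableEq V] in
/-- `NthSmallest G w 0` and `NthSmallest G w 1` coincide, matching `0 - 1 = 0`. -/
theorem nthSmallest_iff (ℓ : ℕ) (M : Finset (Sym2 V)) :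
    NthSmallest G w ℓ M ↔ IsPM G M ∧ #{x ∈ pmWeights G w | x < wt w M} = ℓ - 1 := by
  induction ℓ using Nat.strong_induction_on generalizing M with
  | _ ℓ ih =>
  have excluded_iff : ∀ M', IsPM G M' → ((∀ ℓ', 1 ≤ ℓ' → ℓ' < ℓ → ¬ NthSmallest G w ℓ' M') ↔
      ℓ - 1 ≤ #{x ∈ pmWeights G w | x < wt w M'}) := by
    intro M' hM'
    constructor
    · intro h
      by_contra! hlt
      exact h (#{x ∈ pmWeights G w | x < wt w M'} + 1) (by omega) (by omega)
        ((ih _ (by omega) M').2 ⟨hM', by omega⟩)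
    · intro h ℓ' h1 h2 hnth
      have := ((ih ℓ' h2 M').1 hnth).2
      omega
  rw [NthSmallest]
  constructor
  · rintro ⟨hM, hexcl, hmin⟩
    refine ⟨hM, (card_filter_lt_eq_iff _ _ _).2 ⟨(excluded_iff M hM).1 hexcl, ?_⟩⟩
    intro y hy hle
    obtain ⟨M', hM', rfl⟩ := mem_pmWeights.1 hy
    exact hmin M' hM' ((excluded_iff M' hM').2 hle)
  · rintro ⟨hM, hrank⟩
    obtain ⟨hle, hmin⟩ := (card_filter_lt_eq_iff _ _ _).1 hrank
    exact ⟨hM, (excluded_iff M hM).2 hle,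
      fun M' hM' hexcl => hmin _ (mem_pmWeights.2 ⟨M', hM', rfl⟩) ((excluded_iff M' hM').1 hexcl)⟩

end Rank

def IsFixingSet (G : SimpleGraph V) (w : Sym2 V → ℤ) (M F : Finset (Sym2 V)) : Prop :=
  IsLeast {k : ℤ | ∃ M', IsPM G M' ∧ F ⊆ M' ∧ wt w M' = k} (wt w M)

namespace SimpleGraph.Iso

variable {W : Type} {G : SimpleGraph V} {G' : SimpleGraph W} (φ : G ≃g G')

def sym2Map : Sym2 V ↪ Sym2 W := φ.toEquiv.toEmbedding.sym2Map

omit [Fintype V] [DecidableEq V] in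
@[simp] lemma sym2Map_apply (e : Sym2 V) : φ.sym2Map e = e.map φ := rfl

omit [Fintype V] [DecidableEq V] in
lemma map_sym2Map_surjective : Function.Surjective (Finset.map φ.sym2Map) :=
  fun X => ⟨X.map φ.symm.sym2Map, by ext; simp [Sym2.map_map]⟩

omit [Fintype V] [DecidableEq V] in
lemma wt_map (w : Sym2 V → ℤ) (M : Finset (Sym2 V)) :
    wt (w ∘ Sym2.map φ.symm) (M.map φ.sym2Map) = wt w M := by
  simp [wt, Sym2.map_map]

variable [DecidableEq W]

omit [Fintype V] in
lemma isPM_map_iff {M : Finset (Sym2 V)} : IsPM G' (M.map φ.sym2Map) ↔ IsPM G M := by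
  simp only [isPM_iff_card_filter_mem, forall_mem_map, sym2Map_apply, φ.map_mem_edgeSet_iff]
  refine and_congr_right fun _ =>
    φ.toEquiv.forall_congr_right.symm.trans (forall_congr' fun v => ?_)
  rw [filter_map, card_map]
  congr! 3 with e
  simp [Sym2.mem_map, φ.injective.eq_iff]

omit [Fintype V] in
lemma isFixingSet_map_iff {w : Sym2 V → ℤ} {M F : Finset (Sym2 V)} :
    IsFixingSet G' (w ∘ Sym2.map φ.symm) (M.map φ.sym2Map) (F.map φ.sym2Map) ↔
      IsFixingSet G w M F := by
  simp only [IsFixingSet, φ.map_sym2Map_surjective.exists, φ.isPM_map_iff, φ.wt_map, map_subset_map]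

variable [Fintype W]

lemma pmWeights_eq (w : Sym2 V → ℤ) : pmWeights G' (w ∘ Sym2.map φ.symm) = pmWeights G w := by
  ext x
  simp only [mem_pmWeights, φ.map_sym2Map_surjective.exists, φ.isPM_map_iff, φ.wt_map]

lemma nthSmallest_map_iff {w : Sym2 V → ℤ} {ℓ : ℕ} {M : Finset (Sym2 V)} :
    NthSmallest G' (w ∘ Sym2.map φ.symm) ℓ (M.map φ.sym2Map) ↔ NthSmallest G w ℓ M := by
  rw [nthSmallest_iff, nthSmallest_iff, φ.isPM_map_iff, φ.wt_map, φ.pmWeights_eq]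

end SimpleGraph.Iso

section Copies

variable {ι U : Type}

def sheet (i : ι) : Sym2 U ↪ Sym2 (ι × U) := (Function.Embedding.sectR i U).sym2Map

@[simp] lemma sheet_apply (i : ι) (p : Sym2 U) : sheet i p = p.map (Prod.mk i) := rfl

lemma mem_sheet_iff {i j : ι} {a : U} {p : Sym2 U} : (j, a) ∈ sheet i p ↔ j = i ∧ a ∈ p := by
  simp only [sheet_apply, Sym2.mem_map, Prod.mk.injEq]
  constructor
  · rintro ⟨b, hb, rfl, rfl⟩
    exact ⟨rfl, hb⟩
  · rintro ⟨rfl, ha⟩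
    exact ⟨a, ha, rfl, rfl⟩

lemma sheet_mem_edgeSet_iff (H : SimpleGraph U) (i : ι) {p : Sym2 U} :
    sheet i p ∈ ((⊥ : SimpleGraph ι) □ H).edgeSet ↔ p ∈ H.edgeSet :=
  (boxProdRight ⊥ H i).map_mem_edgeSet_iff

lemma eq_of_sheet_eq_sheet {i j : ι} {p q : Sym2 U} (h : sheet i p = sheet j q) : i = j := by
  have := congrArg (Sym2.map Prod.fst) h
  simp only [sheet_apply, Sym2.map_map, Function.comp_def] at this
  induction p using Sym2.ind
  induction q using Sym2.ind
  simpa using this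

variable [Fintype ι]

lemma pairwiseDisjoint_sheets (P : ι → Finset (Sym2 U)) :
    (↑(univ : Finset ι) : Set ι).PairwiseDisjoint fun i => (P i).map (sheet i) := by
  intro i _ j _ hij
  simp only [Function.onFun, Finset.disjoint_left, mem_map]
  rintro _ ⟨p, -, rfl⟩ ⟨q, -, hq⟩
  exact hij (eq_of_sheet_eq_sheet hq).symm

variable [DecidableEq ι] [DecidableEq U]

noncomputable def onSheet (i : ι) (X : Finset (Sym2 (ι × U))) : Finset (Sym2 U) :=
  X.preimage (sheet i) (sheet i).injective.injOn

def ofSheets (P : ι → Finset (Sym2 U)) : Finset (Sym2 (ι × U)) :=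
  univ.biUnion fun i => (P i).map (sheet i)

lemma mem_ofSheets {P : ι → Finset (Sym2 U)} {e : Sym2 (ι × U)} :
    e ∈ ofSheets P ↔ ∃ i, ∃ p ∈ P i, sheet i p = e := by
  simp [ofSheets]

lemma ofSheets_mono {P Q : ι → Finset (Sym2 U)} (h : ∀ i, P i ⊆ Q i) :
    ofSheets P ⊆ ofSheets Q :=
  biUnion_mono fun i _ => map_subset_map.2 (h i)

lemma card_ofSheets (P : ι → Finset (Sym2 U)) : #(ofSheets P) = ∑ i, #(P i) := by
  simp [ofSheets, card_biUnion (pairwiseDisjoint_sheets P)]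

lemma wt_ofSheets (w : Sym2 U → ℤ) (P : ι → Finset (Sym2 U)) :
    wt (w ∘ Sym2.map Prod.snd) (ofSheets P) = ∑ i, wt w (P i) := by
  simp [wt, ofSheets, sum_biUnion (pairwiseDisjoint_sheets P), Sym2.map_map]

lemma filter_mem_ofSheets (P : ι → Finset (Sym2 U)) (i : ι) (a : U) :
    {e ∈ ofSheets P | (i, a) ∈ e} = {p ∈ P i | a ∈ p}.map (sheet i) := by
  ext e
  simp only [mem_filter, mem_ofSheets, mem_map]
  constructor
  · rintro ⟨⟨j, p, hp, rfl⟩, hmem⟩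
    obtain ⟨rfl, ha⟩ := mem_sheet_iff.1 hmem
    exact ⟨p, ⟨hp, ha⟩, rfl⟩
  · rintro ⟨p, ⟨hp, ha⟩, rfl⟩
    exact ⟨⟨i, p, hp, rfl⟩, mem_sheet_iff.2 ⟨rfl, ha⟩⟩

lemma isPM_ofSheets_iff {H : SimpleGraph U} {P : ι → Finset (Sym2 U)} :
    IsPM ((⊥ : SimpleGraph ι) □ H) (ofSheets P) ↔ ∀ i, IsPM H (P i) := by
  simp only [isPM_iff_card_filter_mem, Prod.forall, filter_mem_ofSheets, card_map,
    forall_and]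
  refine and_congr_left fun _ => ⟨fun h i p hp => ?_, fun h e he => ?_⟩
  · exact (sheet_mem_edgeSet_iff H i).1 (h _ (mem_ofSheets.2 ⟨i, p, hp, rfl⟩))
  · obtain ⟨i, p, hp, rfl⟩ := mem_ofSheets.1 he
    exact (sheet_mem_edgeSet_iff H i).2 (h i p hp)

lemma ofSheets_onSheet {H : SimpleGraph U} {X : Finset (Sym2 (ι × U))}
    (hX : ∀ e ∈ X, e ∈ ((⊥ : SimpleGraph ι) □ H).edgeSet) :
    ofSheets (fun i => onSheet i X) = X := by
  ext e
  simp only [mem_ofSheets, onSheet, mem_preimage]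
  refine ⟨fun ⟨i, p, hp, hpe⟩ => hpe ▸ hp, fun he => ?_⟩
  have hadj := hX e he
  induction e using Sym2.ind with
  | _ u v =>
  obtain ⟨i, a⟩ := u
  obtain ⟨j, b⟩ := v
  obtain rfl : i = j := (by simpa [boxProd_adj] using hadj : H.Adj a b ∧ i = j).2
  exact ⟨i, s(a, b), he, rfl⟩

lemma exists_card_onSheet_le_one {H : SimpleGraph U} {F : Finset (Sym2 (ι × U))}
    (hF : ∀ e ∈ F, e ∈ ((⊥ : SimpleGraph ι) □ H).edgeSet) (hcard : #F < 2 * Fintype.card ι) :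
    ∃ i, #(onSheet i F) ≤ 1 := by
  obtain ⟨i, -, hi⟩ : ∃ i ∈ univ, #(onSheet i F) < 2 := by
    refine exists_lt_of_sum_lt ?_
    rw [← card_ofSheets, ofSheets_onSheet hF]
    simpa [mul_comm] using hcard
  exact ⟨i, by omega⟩

end Copies

section Prism

/-- The triangular prism: triangles `012` and `345` joined by the rungs `03`, `14`, `25`. -/
def prism : SimpleGraph (Fin 6) where
  Adj a b := a ≠ b ∧ (a.val / 3 = b.val / 3 ∨ a.val % 3 = b.val % 3)
  symm := ⟨fun _ _ h => ⟨h.1.symm, h.2.imp Eq.symm Eq.symm⟩⟩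
  loopless := ⟨fun _ h => h.1 rfl⟩

instance : DecidableRel prism.Adj := fun a b => by unfold prism; infer_instance

def prismWeight (e : Sym2 (Fin 6)) : ℤ :=
  (if e = s(0, 3) then 1 else 0) - (if e = s(1, 2) then 1 else 0)

def rungs : Finset (Sym2 (Fin 6)) := {s(0, 3), s(1, 4), s(2, 5)}

def oneRungMatching : Fin 3 → Finset (Sym2 (Fin 6))
  | 0 => {s(0, 3), s(1, 2), s(4, 5)}
  | 1 => {s(1, 4), s(0, 2), s(3, 5)}
  | 2 => {s(2, 5), s(0, 1), s(3, 4)}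

lemma isPM_rungs : IsPM prism rungs := by
  rw [isPM_iff_card_filter_mem]
  decide

lemma wt_rungs : wt prismWeight rungs = 1 := by decide

lemma isPM_and_wt_oneRungMatching :
    ∀ r, IsPM prism (oneRungMatching r) ∧ wt prismWeight (oneRungMatching r) = 0 := by
  simp only [isPM_iff_card_filter_mem]
  decide

lemma exists_mem_oneRungMatching : ∀ e ∈ prism.edgeSet, ∃ r, e ∈ oneRungMatching r := by
  decide

lemma exists_isPM_wt_eq_zero_superset {T : Finset (Sym2 (Fin 6))}
    (hT : ∀ e ∈ T, e ∈ prism.edgeSet) (hcard : #T ≤ 1) :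
    ∃ P, IsPM prism P ∧ wt prismWeight P = 0 ∧ T ⊆ P := by
  obtain ⟨e, he, hTe⟩ : ∃ e ∈ prism.edgeSet, T ⊆ {e} := by
    rcases T.eq_empty_or_nonempty with rfl | ⟨e, heT⟩
    · exact ⟨s(0, 1), by decide, empty_subset _⟩
    · exact ⟨e, hT e heT, fun f hf => mem_singleton.2 (card_le_one.1 hcard f hf e heT)⟩
  obtain ⟨r, her⟩ := exists_mem_oneRungMatching e he
  exact ⟨_, (isPM_and_wt_oneRungMatching r).1, (isPM_and_wt_oneRungMatching r).2,
    hTe.trans (singleton_subset_iff.2 her)⟩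

lemma wt_prismWeight (P : Finset (Sym2 (Fin 6))) :
    wt prismWeight P = (if s(0, 3) ∈ P then 1 else 0) - (if s(1, 2) ∈ P then 1 else 0) := by
  simp [wt, prismWeight, sum_sub_distrib]

lemma IsPM.rung_mem_of_mem {P : Finset (Sym2 (Fin 6))} (hP : IsPM prism P) (h : s(1, 2) ∈ P) :
    s(0, 3) ∈ P := by
  -- the partner of `0` is `1`, `2` or `3`, and `1`, `2` are matched to each other
  obtain ⟨e, ⟨heP, h0e⟩, -⟩ := hP.2 0
  have hnbr : ∀ e ∈ prism.edgeSet, (0 : Fin 6) ∈ e → e = s(0, 1) ∨ e = s(0, 2) ∨ e = s(0, 3) := by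
    decide
  rcases hnbr e (hP.1 e heP) h0e with rfl | rfl | rfl
  · exact absurd ((hP.2 1).unique ⟨heP, by simp⟩ ⟨h, by simp⟩) (by decide)
  · exact absurd ((hP.2 2).unique ⟨heP, by simp⟩ ⟨h, by simp⟩) (by decide)
  · exact heP

lemma wt_prismWeight_le_one (P : Finset (Sym2 (Fin 6))) : wt prismWeight P ≤ 1 := by
  rw [wt_prismWeight]
  split_ifs <;> simp

lemma IsPM.wt_prismWeight_nonneg {P : Finset (Sym2 (Fin 6))} (hP : IsPM prism P) :
    0 ≤ wt prismWeight P := by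
  have := hP.rung_mem_of_mem
  rw [wt_prismWeight]
  split_ifs <;> simp_all

end Prism

section PrismCopies

variable (ι : Type) [Fintype ι] [DecidableEq ι]

def allRungs : Finset (Sym2 (ι × Fin 6)) := ofSheets fun _ => rungs

lemma isPM_allRungs : IsPM ((⊥ : SimpleGraph ι) □ prism) (allRungs ι) :=
  isPM_ofSheets_iff.2 fun _ => isPM_rungs

lemma wt_allRungs : wt (prismWeight ∘ Sym2.map Prod.snd) (allRungs ι) = Fintype.card ι := by
  simp [allRungs, wt_ofSheets, wt_rungs]

lemma pmWeights_prismCopies :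
    pmWeights ((⊥ : SimpleGraph ι) □ prism) (prismWeight ∘ Sym2.map Prod.snd) =
      Icc 0 (Fintype.card ι : ℤ) := by
  ext x
  rw [mem_pmWeights, mem_Icc]
  constructor
  · rintro ⟨M, hM, rfl⟩
    rw [← ofSheets_onSheet hM.1, wt_ofSheets]
    rw [← ofSheets_onSheet hM.1, isPM_ofSheets_iff] at hM
    constructor
    · exact sum_nonneg fun i _ => (hM i).wt_prismWeight_nonneg
    · calc ∑ i, wt prismWeight (onSheet i M) ≤ ∑ _i : ι, (1 : ℤ) :=
            sum_le_sum fun i _ => wt_prismWeight_le_one _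
        _ = Fintype.card ι := by simp
  · rintro ⟨h0, hx⟩
    obtain ⟨t, -, ht⟩ := exists_subset_card_eq (s := (univ : Finset ι)) (n := x.toNat)
      (by rw [card_univ]; omega)
    obtain ⟨hP₀, hP₀wt⟩ := isPM_and_wt_oneRungMatching 0
    refine ⟨ofSheets fun i => if i ∈ t then rungs else oneRungMatching 0,
      isPM_ofSheets_iff.2 fun i => ?_, ?_⟩
    · split_ifs
      exacts [isPM_rungs, hP₀]
    · simp [wt_ofSheets, apply_ite, wt_rungs, hP₀wt, ht]
      omega

lemma nthSmallest_allRungs {ℓ : ℕ} (hℓ : ℓ - 1 = Fintype.card ι) :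
    NthSmallest ((⊥ : SimpleGraph ι) □ prism) (prismWeight ∘ Sym2.map Prod.snd) ℓ
      (allRungs ι) := by
  rw [nthSmallest_iff, pmWeights_prismCopies, wt_allRungs]
  refine ⟨isPM_allRungs ι, ?_⟩
  have : {x ∈ Icc (0 : ℤ) (Fintype.card ι) | x < (Fintype.card ι : ℤ)} =
      Ico 0 (Fintype.card ι : ℤ) := by
    ext
    simp only [mem_filter, mem_Icc, mem_Ico]
    omega
  rw [this, Int.card_Ico]
  omega

lemma not_isFixingSet_allRungs {F : Finset (Sym2 (ι × Fin 6))} (hF : #F < 2 * Fintype.card ι) :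
    ¬ IsFixingSet ((⊥ : SimpleGraph ι) □ prism) (prismWeight ∘ Sym2.map Prod.snd)
      (allRungs ι) F := by
  rintro ⟨⟨M, hM, hFM, -⟩, hmin⟩
  have hFE : ∀ e ∈ F, e ∈ ((⊥ : SimpleGraph ι) □ prism).edgeSet := fun e he => hM.1 e (hFM he)
  have hPM : ∀ i, IsPM prism (onSheet i M) :=
    isPM_ofSheets_iff.1 ((ofSheets_onSheet hM.1).symm ▸ hM)
  have hFP : ∀ i, onSheet i F ⊆ onSheet i M := fun i => monotone_preimage (sheet i).injective hFM
  obtain ⟨i, hi⟩ := exists_card_onSheet_le_one hFE hF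
  obtain ⟨Q, hQ, hQwt, hFQ⟩ :=
    exists_isPM_wt_eq_zero_superset (fun e he => (hPM i).1 e (hFP i he)) hi
  set P := Function.update (fun j => onSheet j M) i Q
  have hM' : IsPM ((⊥ : SimpleGraph ι) □ prism) (ofSheets P) :=
    isPM_ofSheets_iff.2 <| (Function.forall_update_iff _ (p := fun _ X => IsPM prism X)).2
      ⟨hQ, fun j _ => hPM j⟩
  have hFM' : F ⊆ ofSheets P :=
    (ofSheets_onSheet hFE).symm.subset.trans <| ofSheets_mono <|
      (Function.forall_update_iff _ (p := fun j X => onSheet j F ⊆ X)).2 ⟨hFQ, fun j _ => hFP j⟩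
  have hwt : wt (prismWeight ∘ Sym2.map Prod.snd) (ofSheets P) < Fintype.card ι := by
    rw [wt_ofSheets]
    calc ∑ j, wt prismWeight (P j) < ∑ _j : ι, (1 : ℤ) :=
          sum_lt_sum (fun j _ => wt_prismWeight_le_one _) ⟨i, mem_univ i, by simp [P, hQwt]⟩
      _ = Fintype.card ι := by simp
  have := hmin ⟨_, hM', hFM', rfl⟩
  rw [wt_allRungs] at this
  omega

end PrismCopies

theorem general_bound_tight_general (ℓ : ℕ) :
    ∃ (n : ℕ) (G : SimpleGraph (Fin n)) (w : Sym2 (Fin n) → ℤ) (M : Finset (Sym2 (Fin n))),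
      NthSmallest G w ℓ M ∧
      ∀ F : Finset (Sym2 (Fin n)), (∀ e ∈ F, e ∈ G.edgeSet) → F.card < 2 * (ℓ - 1) →
        ¬ IsLeast {k : ℤ | ∃ M' : Finset (Sym2 (Fin n)), IsPM G M' ∧ F ⊆ M' ∧ wt w M' = k}
            (wt w M) := by
  let φ := Iso.map (Fintype.equivFin _) ((⊥ : SimpleGraph (Fin (ℓ - 1))) □ prism)
  refine ⟨_, _, _, _, φ.nthSmallest_map_iff.2 (nthSmallest_allRungs _ (Fintype.card_fin _).symm),
    fun F _ hF => ?_⟩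
  obtain ⟨F, rfl⟩ := φ.map_sym2Map_surjective F
  rw [card_map] at hF
  exact φ.isFixingSet_map_iff.not.2 (not_isFixingSet_allRungs _ (by simpa using hF))

/-- **Tightness of the bound `2(ℓ - 1)` for general graphs.** For every `ℓ ≥ 2` there are
a finite graph `G` with integer edge weights `w` and an `ℓ`-th smallest perfect matching
`M` of `G` such that for every set `F` of fewer than `2(ℓ - 1)` edges of `G`, the minimum
of `w(M')` over perfect matchings `M'` of `G` with `F ⊆ M'` is not `w(M)`. -/
theorem general_bound_tight (ℓ : ℕ) (hℓ : 2 ≤ ℓ) :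
    ∃ (n : ℕ) (G : SimpleGraph (Fin n)) (w : Sym2 (Fin n) → ℤ) (M : Finset (Sym2 (Fin n))),
      NthSmallest G w ℓ M ∧
      ∀ F : Finset (Sym2 (Fin n)), (∀ e ∈ F, e ∈ G.edgeSet) → F.card < 2 * (ℓ - 1) →
        ¬ IsLeast {k : ℤ | ∃ M' : Finset (Sym2 (Fin n)), IsPM G M' ∧ F ⊆ M' ∧ wt w M' = k}
            (wt w M) :=
  general_bound_tight_general ℓ
end

section
/- Let G = (V, E) be a finite simple undirected graph on n vertices with conservative edge weights w : E → ℤ, and define w' : E → ℤ by w'(e) = 2n·w(e) + 1. Then w' is conservative, every cycle C of G satisfies w'(C) ≡ |C| (mod 2) (i.e. C has odd w'-weight if and only if C has an odd number of edges), and for every integer k, G contains a cycle of odd length with w-weight at most k if and only if G contains a cycle of odd w'-weight at most 2nk + n. -/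
variable {V : Type} [Fintype V] [DecidableEq V]

private lemma sum_map_aux (a : ℤ) (w : Sym2 V → ℤ) (l : List (Sym2 V)) :
    ((l.map fun e => a * w e + 1).sum) = a * (l.map w).sum + l.length := by
  induction l with
  | nil => simp
  | cons e t ih => simp [ih]; ring

private lemma cyc_len_le {G : SimpleGraph V} {v : V} {c : G.Walk v v} (hc : c.IsCycle) :
    c.edges.length ≤ Fintype.card V := by
  have h1 : c.edges.length = c.length := c.length_edges
  have h2 : c.support.tail.length = c.length := by
    have h3 : c.support.length = c.length + 1 := c.length_support
    simp [List.length_tail, h3]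
  rw [h1, ← h2]
  exact hc.support_nodup.length_le_card

/-- **Reduction from shortest odd-length cycle to shortest odd-weight cycle.** Let `G` be
a graph on `n` vertices with conservative weights `w`, and let `w'(e) = 2n·w(e) + 1`. Then
`w'` is conservative, every cycle `C` satisfies `w'(C) ≡ |C| (mod 2)` (it has odd
`w'`-weight iff it has an odd number of edges), and for every integer `k`, `G` has a cycle
of odd length with `w`-weight at most `k` iff `G` has a cycle of odd `w'`-weight at most
`2nk + n`. -/
theorem odd_length_iff_odd_weight (G : SimpleGraph V) (w : Sym2 V → ℤ)
    (hcons : ∀ (v : V) (c : G.Walk v v), c.IsCycle → 0 ≤ cycWt w c)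
    (w' : Sym2 V → ℤ)
    (hw' : ∀ e : Sym2 V, w' e = 2 * (Fintype.card V : ℤ) * w e + 1) :
    (∀ (v : V) (c : G.Walk v v), c.IsCycle → 0 ≤ cycWt w' c) ∧
    (∀ (v : V) (c : G.Walk v v), c.IsCycle → (Odd (cycWt w' c) ↔ Odd c.edges.length)) ∧
    (∀ k : ℤ,
      (∃ (v : V) (c : G.Walk v v), c.IsCycle ∧ Odd c.edges.length ∧ cycWt w c ≤ k) ↔
      (∃ (v : V) (c : G.Walk v v), c.IsCycle ∧ Odd (cycWt w' c) ∧
        cycWt w' c ≤ 2 * (Fintype.card V : ℤ) * k + (Fintype.card V : ℤ))) := by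
  set n : ℤ := (Fintype.card V : ℤ) with hn
  have key : ∀ (v : V) (c : G.Walk v v),
      cycWt w' c = 2 * n * cycWt w c + c.edges.length := by
    intro v c
    have : c.edges.map w' = c.edges.map fun e => 2 * n * w e + 1 := by
      apply List.map_congr_left; intro e _; exact hw' e
    simp only [cycWt, this, sum_map_aux]
  have hn0 : (0:ℤ) ≤ n := by positivity
  refine ⟨?_, ?_, ?_⟩
  · intro v c hc
    rw [key]
    have := hcons v c hc
    positivity
  · intro v c hc
    rw [key]
    constructor
    · intro h
      rcases h with ⟨m, hm⟩
      refine Int.odd_coe_nat _ |>.mp ?_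
      exact ⟨m - n * cycWt w c, by linarith⟩
    · intro h
      rcases (Int.odd_coe_nat _).mpr h with ⟨m, hm⟩
      exact ⟨n * cycWt w c + m, by linarith⟩
  · intro k
    constructor
    · rintro ⟨v, c, hc, hodd, hle⟩
      refine ⟨v, c, hc, ?_, ?_⟩
      · rw [key]
        rcases (Int.odd_coe_nat c.edges.length).mpr hodd with ⟨m, hm⟩
        exact ⟨n * cycWt w c + m, by linarith⟩
      · rw [key]
        have hlen : (c.edges.length : ℤ) ≤ n := by
          have := cyc_len_le hc
          rw [hn]; exact_mod_cast this
        nlinarith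
    · rintro ⟨v, c, hc, hodd, hle⟩
      have hn1 : (1:ℤ) ≤ n := by
        have : 0 < Fintype.card V := Fintype.card_pos_iff.mpr ⟨v⟩
        rw [hn]; exact_mod_cast this
      have hlodd : Odd c.edges.length := by
        rw [key] at hodd
        rcases hodd with ⟨m, hm⟩
        refine Int.odd_coe_nat _ |>.mp ⟨m - n * cycWt w c, by linarith⟩
      refine ⟨v, c, hc, hlodd, ?_⟩
      rw [key] at hle
      have hlpos : (1:ℤ) ≤ (c.edges.length : ℤ) := by
        rcases hlodd with ⟨m, hm⟩
        have : 1 ≤ c.edges.length := by omega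
        exact_mod_cast this
      have h2 : 2 * n * cycWt w c < 2 * n * (k + 1) := by nlinarith
      have := lt_of_mul_lt_mul_left (by nlinarith : n * (2 * cycWt w c) < n * (2 * (k+1))) hn0
      omega
end
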